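/- arXiv:1803.07727 — 6 statements merged into one kernel-verified Lean document; each statement's English description precedes it below -/
import Mathlib

section
/- For all positive integers n, the sum over k from 1 to n of (1/(n-k+1)!) * (n!/k!) * C(n-1, k-1) equals (1/(n+1)) * C(2n, n). -/
theorem sum_bell_eq_catalan (n : ℕ) (hn : 0 < n) :
    ∑ k ∈ Finset.Icc 1 n,
        (1 / ((n - k + 1).factorial : ℚ)) * ((n.factorial : ℚ) / (k.factorial : ℚ)) *
          ((n - 1).choose (k - 1)) =
      (1 / ((n : ℚ) + 1)) * ((2 * n).choose n : ℚ) := by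
  have h1 : ∀ k ∈ Finset.Icc 1 n,
      (1 / ((n - k + 1).factorial : ℚ)) * ((n.factorial : ℚ) / (k.factorial : ℚ)) *
          ((n - 1).choose (k - 1)) =
      ((n.choose k * n.choose (k - 1) : ℕ) : ℚ) / (n : ℚ) := by
    intro k hk
    obtain ⟨hk1, hk2⟩ := Finset.mem_Icc.mp hk
    have e1 : n.choose k * k.factorial * (n - k).factorial = n.factorial :=
      Nat.choose_mul_factorial_mul_factorial hk2
    have e2 : (n - 1).choose (k - 1) * n = n.choose (k - 1) * (n - k + 1) := by
      have h := Nat.choose_mul_succ_eq (n - 1) (k - 1)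
      have h3 : n - 1 + 1 = n := by omega
      have h4 : n - (k - 1) = n - k + 1 := by omega
      rw [h3, h4] at h
      exact h
    have e3 : (n - k + 1).factorial = (n - k + 1) * (n - k).factorial :=
      Nat.factorial_succ (n - k)
    rw [e3, Nat.cast_mul, Nat.cast_mul]
    set A : ℚ := ((n - k + 1 : ℕ) : ℚ) with hAdef
    have e1' : (n.choose k : ℚ) * k.factorial * (n - k).factorial = n.factorial := by
      exact_mod_cast e1
    have e2' : ((n - 1).choose (k - 1) : ℚ) * n = (n.choose (k - 1) : ℚ) * A := by
      rw [hAdef]; exact_mod_cast e2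
    have hf1 : ((n - k).factorial : ℚ) ≠ 0 := by positivity
    have hf2 : ((k).factorial : ℚ) ≠ 0 := by positivity
    have hA : A ≠ 0 := by rw [hAdef]; positivity
    have hn0 : (n : ℚ) ≠ 0 := by positivity
    field_simp
    linear_combination (- ((n - 1).choose (k - 1) : ℚ) * n) * e1' +
      ((n.choose k : ℚ) * (n - k).factorial * k.factorial) * e2'
  rw [Finset.sum_congr rfl h1, ← Finset.sum_div, ← Nat.cast_sum]
  have h2 : ∑ k ∈ Finset.Icc 1 n, n.choose k * n.choose (k - 1) =
      (2 * n).choose (n + 1) := by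
    rw [two_mul, Nat.add_choose_eq, Finset.Nat.sum_antidiagonal_eq_sum_range_succ_mk]
    have hsub : Finset.Icc 1 n ⊆ Finset.range (n + 1 + 1) := by
      intro x hx
      simp only [Finset.mem_Icc] at hx
      simp only [Finset.mem_range]
      omega
    rw [← Finset.sum_subset hsub]
    · apply Finset.sum_congr rfl
      intro k hk
      obtain ⟨hk1, hk2⟩ := Finset.mem_Icc.mp hk
      congr 1
      have h5 : n + 1 - k = n - (k - 1) := by omega
      rw [h5, Nat.choose_symm (by omega)]
    · intro x hx hnx
      simp only [Finset.mem_range] at hx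
      simp only [Finset.mem_Icc, not_and, not_le] at hnx
      have : x = 0 ∨ x = n + 1 := by omega
      rcases this with h | h <;> subst h <;>
        simp [Nat.choose_eq_zero_of_lt (Nat.lt_succ_self n)]
  rw [h2]
  have h3 : (2 * n).choose (n + 1) * (n + 1) = (2 * n).choose n * n := by
    have := Nat.choose_succ_right_eq (2 * n) n
    rwa [show 2 * n - n = n by omega] at this
  have h3' : ((2 * n).choose (n + 1) : ℚ) * (n + 1) = ((2 * n).choose n : ℚ) * n := by
    exact_mod_cast h3
  have hn0 : (n : ℚ) ≠ 0 := by positivity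
  have hn1 : (n : ℚ) + 1 ≠ 0 := by positivity
  field_simp
  linear_combination h3'
end

section
/- For all positive integers n and integers m ≥ 0, the sum over k from 1 to n of (1/k) * C(m*n, k-1) * C(n-1, k-1) equals (1/(m*n+1)) * C((m+1)*n, n). -/
open Finset

theorem sum_eq_fussCatalan (n m : ℕ) (hn : 0 < n) :
    ∑ k ∈ Finset.Icc 1 n,
        (1 / (k : ℚ)) * ((m * n).choose (k - 1) : ℚ) * ((n - 1).choose (k - 1) : ℚ) =
      (1 / ((m * n : ℕ) + 1 : ℚ)) * (((m + 1) * n).choose n : ℚ) := by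
  have key : ∑ k ∈ Finset.Icc 1 n, (m * n).choose (k - 1) * n.choose k
      = (m * n + n).choose (n - 1) := by
    rw [Nat.add_choose_eq, Finset.Nat.sum_antidiagonal_eq_sum_range_succ_mk,
      show (n - 1).succ = n by omega, show Finset.Icc 1 n = Finset.Ico 1 (n+1) by rw [Finset.Ico_add_one_right_eq_Icc],
      Finset.sum_Ico_eq_sum_range]
    simp only [Nat.add_sub_cancel, Nat.add_sub_cancel_left]
    apply Finset.sum_congr rfl
    intro k hk
    rw [Finset.mem_range] at hk
    congr 1
    rw [show n - 1 - k = n - (1 + k) by omega, Nat.choose_symm (by omega)]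
  have step : ∀ k ∈ Finset.Icc 1 n,
      (1 / (k : ℚ)) * ((m * n).choose (k - 1) : ℚ) * ((n - 1).choose (k - 1) : ℚ)
      = (1 / (n : ℚ)) * (((m * n).choose (k - 1) * n.choose k : ℕ) : ℚ) := by
    intro k hk
    rw [Finset.mem_Icc] at hk
    have hnat : n * (n - 1).choose (k - 1) = n.choose k * k := by
      have := Nat.add_one_mul_choose_eq (n - 1) (k - 1)
      rwa [show n - 1 + 1 = n by omega, show k - 1 + 1 = k by omega] at this
    have hq : (n : ℚ) * ((n - 1).choose (k - 1) : ℚ) = (n.choose k : ℚ) * k := by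
      exact_mod_cast congrArg (Nat.cast : ℕ → ℚ) hnat
    have hk0 : (k : ℚ) ≠ 0 := Nat.cast_ne_zero.mpr (by omega)
    have hn0 : (n : ℚ) ≠ 0 := by exact_mod_cast hn.ne'
    push_cast
    field_simp
    linear_combination (((m * n).choose (k - 1) : ℚ)) * hq
  rw [Finset.sum_congr rfl step, ← Finset.mul_sum, ← Nat.cast_sum, key]
  have habs : (m * n + n).choose n * n = (m * n + n).choose (n - 1) * (m * n + 1) := by
    have := Nat.choose_succ_right_eq (m * n + n) (n - 1)
    rw [show n - 1 + 1 = n by omega] at this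
    rw [this]
    congr 1
    omega
  have hq2 : ((m * n + n).choose n : ℚ) * n = ((m * n + n).choose (n - 1) : ℚ) * (m * n + 1) := by
    exact_mod_cast congrArg (Nat.cast : ℕ → ℚ) habs
  have hn0 : (n : ℚ) ≠ 0 := by exact_mod_cast hn.ne'
  have hm0 : ((m : ℚ) * n + 1) ≠ 0 := by positivity
  rw [show (m + 1) * n = m * n + n by ring]
  push_cast at hq2 ⊢
  field_simp
  linarith [hq2]
end

section
/- For any numbers a, b, c and integers n, k with k ≥ 2: -(b/c)*prod_{j=1}^{k-1}(an+bk+cj-b) + ((b+c)/c)*prod_{j=1}^{k-1}(an+bk+c(j-1)-b) = an * prod_{j=1}^{k-2}(an+b(k-1)+cj), where c ≠ 0. -/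
theorem gf_cancellation (a b c : ℂ) (hc : c ≠ 0) (n : ℤ) (k : ℕ) (hk : 2 ≤ k) :
    -(b / c) * ∏ j ∈ Finset.Icc 1 (k - 1), (a * n + b * k + c * j - b) +
      (b + c) / c * ∏ j ∈ Finset.Icc 1 (k - 1), (a * n + b * k + c * ((j : ℂ) - 1) - b) =
      a * n * ∏ j ∈ Finset.Icc 1 (k - 2), (a * n + b * ((k : ℂ) - 1) + c * j) := by
  obtain ⟨m, rfl⟩ := Nat.exists_eq_add_of_le hk
  have h1 : 2 + m - 1 = m + 1 := by omega
  have h2 : 2 + m - 2 = m := by omega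
  rw [h1, h2, ← Finset.Ico_add_one_right_eq_Icc,
    Finset.prod_Ico_eq_prod_range, Finset.prod_Ico_eq_prod_range, ← Finset.Ico_add_one_right_eq_Icc,
    Finset.prod_Ico_eq_prod_range]
  simp only [Nat.add_sub_cancel]
  rw [Finset.prod_range_succ, Finset.prod_range_succ']
  set P : ℂ := ∏ i ∈ Finset.range m, (a * n + b * (2 + m : ℕ) + c * (1 + i : ℕ) - b) with hP
  have hQ : ∏ i ∈ Finset.range m, (a * n + b * (2 + m : ℕ) + c * ((1 + (i + 1) : ℕ) : ℂ) - b - c)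
      = P := by
    apply Finset.prod_congr rfl
    intro i _
    push_cast
    ring
  have hR : ∏ i ∈ Finset.range m, (a * n + b * ((2 + m : ℕ) - 1 : ℂ) + c * (1 + i : ℕ)) = P := by
    apply Finset.prod_congr rfl
    intro i _
    push_cast
    ring
  have hcast : ∀ i : ℕ, (((1 + i : ℕ) : ℂ) - 1) = (i : ℂ) := by intro i; push_cast; ring
  simp only [hcast] at *
  have hS : ∏ x ∈ Finset.range m, (a * n + b * ((2:ℕ) + m : ℕ) + c * ((x:ℕ) + 1 : ℕ) - b) = P := by
    apply Finset.prod_congr rfl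
    intro i _
    push_cast
    ring
  rw [hS, hR]
  push_cast
  field_simp
  ring
end

section
/- Let α, β, γ be real with γ ≠ 0, and x a sequence; define y_n = sum_{k=1}^n C(αn+βk+γ-1, k-1)*(k-1)!*B_{n,k}(x). Then for any complex λ, sum_{k=1}^n γ^{k-1} C(λ/γ, k-1)*(k-1)!*B_{n,k}(y) = sum_{k=1}^n C(αn+βk+γ-1+λ, k-1)*(k-1)!*B_{n,k}(x). -/
open Finset

/-- The (exponential) partial Bell polynomial `B_{n,k}(z_1, z_2, ...)`, defined via
`(1/k!) * (∑_{j ≥ 1} z_j t^j / j!)^k = ∑_{n ≥ k} B_{n,k}(z) t^n / n!`.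
Here `z j` denotes `z_j` (the value `z 0` is irrelevant). -/
noncomputable def bellPoly (z : ℕ → ℂ) (n k : ℕ) : ℂ :=
  (n.factorial : ℂ) / (k.factorial : ℂ) *
    PowerSeries.coeff n
      ((PowerSeries.mk fun j => if j = 0 then 0 else z j / (j.factorial : ℂ)) ^ k)

namespace BellAux

noncomputable section

/-- generalized binomial coefficient for complex upper argument -/
def bc (r : ℂ) (k : ℕ) : ℂ := (∏ j ∈ Finset.range k, (r - j)) / (k.factorial : ℂ)

lemma fact_ne (k : ℕ) : ((k.factorial : ℕ) : ℂ) ≠ 0 :=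
  Nat.cast_ne_zero.mpr (Nat.factorial_ne_zero k)

lemma ff_eq_bc (r : ℂ) (k : ℕ) : (∏ j ∈ Finset.range k, (r - j)) = bc r k * (k.factorial : ℂ) := by
  rw [bc, div_mul_cancel₀ _ (fact_ne k)]

@[simp] lemma bc_zero (r : ℂ) : bc r 0 = 1 := by simp [bc]

lemma bc_peel (r : ℂ) (k : ℕ) :
    (∏ j ∈ Finset.range (k+1), (r - j)) = r * (∏ j ∈ Finset.range k, ((r - 1) - j)) := by
  rw [Finset.prod_range_succ']
  have h1 : ∀ j ∈ Finset.range k, (r - ((j:ℕ)+1 : ℕ)) = (r - 1 - j) := by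
    intro j _; push_cast; ring
  rw [Finset.prod_congr rfl h1]
  simp [mul_comm]

/-- absorption: (k+1) * bc r (k+1) = r * bc (r-1) k -/
lemma bc_absorb (r : ℂ) (k : ℕ) :
    ((k:ℂ)+1) * bc r (k+1) = r * bc (r-1) k := by
  rw [bc, bc, bc_peel, Nat.factorial_succ, Nat.cast_mul]
  have hk := fact_ne k
  have hk1 : ((k:ℂ)+1) ≠ 0 := Nat.cast_add_one_ne_zero k
  push_cast
  field_simp

lemma bc_one_eq_zero {k : ℕ} (hk : 2 ≤ k) : bc 1 k = 0 := by
  rw [bc, div_eq_zero_iff]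
  left
  apply Finset.prod_eq_zero (i := 1) (Finset.mem_range.mpr hk)
  simp

@[simp] lemma bc_one_one : bc 1 1 = 1 := by simp [bc]

/-- Vandermonde for generalized binomial coefficients -/
lemma bc_vandermonde : ∀ (J : ℕ) (x y : ℂ),
    ∑ I ∈ Finset.range (J+1), bc x I * bc y (J - I) = bc (x+y) J := by
  intro J
  induction J with
  | zero => intro x y; simp
  | succ J ih =>
    intro x y
    have hJ1 : ((J:ℂ)+1) ≠ 0 := Nat.cast_add_one_ne_zero J
    apply mul_left_cancel₀ hJ1
    have expand : ((J:ℂ)+1) * ∑ I ∈ Finset.range (J+2), bc x I * bc y (J+1-I)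
        = (∑ I ∈ Finset.range (J+2), (I:ℂ) * (bc x I * bc y (J+1-I)))
          + (∑ I ∈ Finset.range (J+2), ((J+1-I : ℕ):ℂ) * (bc x I * bc y (J+1-I))) := by
      rw [Finset.mul_sum, ← Finset.sum_add_distrib]
      apply Finset.sum_congr rfl
      intro I hI
      have hIle : I ≤ J+1 := Nat.lt_succ_iff.mp (Finset.mem_range.mp hI)
      have h2 : (I:ℂ) + ((J+1-I : ℕ):ℂ) = ((J:ℂ)+1) := by
        rw [← Nat.cast_add]
        rw [Nat.add_sub_cancel' hIle]
        push_cast; ring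
      rw [← h2]; ring
    have sum1 : (∑ I ∈ Finset.range (J+2), (I:ℂ) * (bc x I * bc y (J+1-I)))
        = x * bc (x + y - 1) J := by
      rw [Finset.sum_range_succ' (fun I => (I:ℂ) * (bc x I * bc y (J+1-I))) (J+1)]
      simp only [Nat.cast_zero, zero_mul, add_zero]
      have h3 : ∀ I ∈ Finset.range (J+1), ((I+1 : ℕ):ℂ) * (bc x (I+1) * bc y (J+1-(I+1)))
          = x * (bc (x-1) I * bc y (J-I)) := by
        intro I hI
        have e1 : J+1-(I+1) = J-I := by omega
        have e2 : ((I+1 : ℕ):ℂ) = (I:ℂ)+1 := by push_cast; ring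
        rw [e1, e2, show ((I:ℂ)+1) * (bc x (I+1) * bc y (J-I))
            = (((I:ℂ)+1) * bc x (I+1)) * bc y (J-I) by ring, bc_absorb]
        ring
      rw [Finset.sum_congr rfl h3, ← Finset.mul_sum, ih (x-1) y]
      ring_nf
    have sum2 : (∑ I ∈ Finset.range (J+2), ((J+1-I : ℕ):ℂ) * (bc x I * bc y (J+1-I)))
        = y * bc (x + y - 1) J := by
      rw [Finset.sum_range_succ]
      simp only [Nat.sub_self, Nat.cast_zero, zero_mul, add_zero]
      have h4 : ∀ I ∈ Finset.range (J+1), ((J+1-I : ℕ):ℂ) * (bc x I * bc y (J+1-I))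
          = y * (bc x I * bc (y-1) (J-I)) := by
        intro I hI
        have hIle : I ≤ J := Nat.lt_succ_iff.mp (Finset.mem_range.mp hI)
        have e1 : J+1-I = (J-I)+1 := by omega
        have e2 : ((J+1-I : ℕ):ℂ) = ((J-I : ℕ):ℂ)+1 := by rw [e1]; push_cast; ring
        rw [e2, e1, show (((J-I : ℕ):ℂ)+1) * (bc x I * bc y ((J-I)+1))
            = bc x I * ((((J-I : ℕ):ℂ)+1) * bc y ((J-I)+1)) by ring, bc_absorb]
        ring
      rw [Finset.sum_congr rfl h4, ← Finset.mul_sum, ih x (y-1)]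
      ring_nf
    rw [expand, sum1, sum2]
    have habs := bc_absorb (x+y) J
    calc x * bc (x+y-1) J + y * bc (x+y-1) J = (x+y) * bc (x+y-1) J := by ring
      _ = ((J:ℂ)+1) * bc (x+y) (J+1) := by rw [bc_absorb]
  
/-- weighted Vandermonde -/
lemma bc_vandermonde_w (J : ℕ) (x y : ℂ) :
    ∑ I ∈ Finset.range (J+2), (I:ℂ) * (bc x I * bc y (J+1-I)) = x * bc (x+y-1) J := by
  rw [Finset.sum_range_succ' (fun I => (I:ℂ) * (bc x I * bc y (J+1-I))) (J+1)]
  simp only [Nat.cast_zero, zero_mul, add_zero]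
  have h3 : ∀ I ∈ Finset.range (J+1), ((I+1 : ℕ):ℂ) * (bc x (I+1) * bc y (J+1-(I+1)))
      = x * (bc (x-1) I * bc y (J-I)) := by
    intro I hI
    have e1 : J+1-(I+1) = J-I := by omega
    have e2 : ((I+1 : ℕ):ℂ) = (I:ℂ)+1 := by push_cast; ring
    rw [e1, e2, show ((I:ℂ)+1) * (bc x (I+1) * bc y (J-I))
        = (((I:ℂ)+1) * bc x (I+1)) * bc y (J-I) by ring, bc_absorb]
    ring
  rw [Finset.sum_congr rfl h3, ← Finset.mul_sum, bc_vandermonde J (x-1) y]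
  ring_nf

section Series

open PowerSeries

variable (a b : ℂ) (F : PowerSeries ℂ)

lemma coeff_pow_eq_zero (hF : constantCoeff F = 0) :
    ∀ (k n : ℕ), n < k → PowerSeries.coeff n (F^k) = 0 := by
  intro k
  induction k with
  | zero => intro n hn; omega
  | succ k ih =>
    intro n hn
    rw [pow_succ, PowerSeries.coeff_mul]
    apply Finset.sum_eq_zero
    intro p hp
    have hpm := Finset.HasAntidiagonal.mem_antidiagonal.mp hp
    by_cases h1 : p.1 < k
    · rw [ih p.1 h1, zero_mul]
    · have : p.2 = 0 := by omega
      rw [this]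
      have : (PowerSeries.coeff 0) F = 0 := by
        rw [PowerSeries.coeff_zero_eq_constantCoeff, hF]
      rw [this, mul_zero]

/-- t·d/dt operator -/
def xd (φ : PowerSeries ℂ) : PowerSeries ℂ := PowerSeries.mk fun n => (n:ℂ) * PowerSeries.coeff n φ

@[simp] lemma coeff_xd (φ : PowerSeries ℂ) (n : ℕ) :
    PowerSeries.coeff n (xd φ) = (n:ℂ) * PowerSeries.coeff n φ := by
  rw [xd, PowerSeries.coeff_mk]

lemma xd_mul (φ ψ : PowerSeries ℂ) : xd (φ * ψ) = xd φ * ψ + φ * xd ψ := by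
  ext n
  rw [coeff_xd, map_add, PowerSeries.coeff_mul, PowerSeries.coeff_mul, PowerSeries.coeff_mul,
    Finset.mul_sum, ← Finset.sum_add_distrib]
  apply Finset.sum_congr rfl
  intro p hp
  have hpm := Finset.HasAntidiagonal.mem_antidiagonal.mp hp
  simp only [coeff_xd]
  have hn : (n:ℂ) = (p.1:ℂ) + (p.2:ℂ) := by rw [← Nat.cast_add, hpm]
  rw [hn]
  ring

lemma xd_pow (k : ℕ) : xd (F^(k+1)) = ((k:ℂ)+1) • (F^k * xd F) := by
  induction k with
  | zero => simp [xd_mul]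
  | succ k ih =>
    rw [pow_succ, xd_mul, ih]
    have : F ^ (k + 1) * xd F = F^k * xd F * F := by rw [pow_succ]; ring
    rw [this, smul_mul_assoc]
    push_cast
    match_scalars <;> ring

/-- scalar convolution identity -/
lemma conv_P (k m n : ℕ) :
    ∑ p ∈ Finset.HasAntidiagonal.antidiagonal n, PowerSeries.coeff p.1 (F^k) * PowerSeries.coeff p.2 (F^m)
      = PowerSeries.coeff n (F^(k+m)) := by
  rw [pow_add, PowerSeries.coeff_mul]

/-- weighted convolution identity (from derivative trick) -/
lemma conv_xd (k m n : ℕ) (hk : 1 ≤ k) :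
    ((m:ℂ)+(k:ℂ)) * ∑ p ∈ Finset.HasAntidiagonal.antidiagonal n,
        (p.1:ℂ) * (PowerSeries.coeff p.1 (F^k) * PowerSeries.coeff p.2 (F^m))
      = (k:ℂ) * (n:ℂ) * PowerSeries.coeff n (F^(k+m)) := by
  obtain ⟨k', rfl⟩ : ∃ k', k = k'+1 := ⟨k-1, by omega⟩
  have lhs1 : ∑ p ∈ Finset.HasAntidiagonal.antidiagonal n,
      (p.1:ℂ) * (PowerSeries.coeff p.1 (F^(k'+1)) * PowerSeries.coeff p.2 (F^m))
      = PowerSeries.coeff n (xd (F^(k'+1)) * F^m) := by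
    rw [PowerSeries.coeff_mul]
    apply Finset.sum_congr rfl
    intro p hp
    rw [coeff_xd]; ring
  rw [lhs1, xd_pow, smul_mul_assoc, map_smul, smul_eq_mul]
  have e3 : F ^ k' * xd F * F ^ m = F^(k'+m) * xd F := by rw [pow_add]; ring
  rw [e3, show k'+1+m = (k'+m)+1 from by omega]
  have e4 : (n:ℂ) * PowerSeries.coeff n (F^((k'+m)+1))
      = (((k'+m : ℕ):ℂ)+1) * PowerSeries.coeff n (F^(k'+m) * xd F) := by
    rw [← coeff_xd, xd_pow, map_smul, smul_eq_mul]
  push_cast at e4 ⊢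
  linear_combination (-(k':ℂ)-1) * e4

end Series

/-- extend an `Icc 1 m` sum to `range (m+1)` -/
lemma sum_Icc1_eq_range (m : ℕ) (f : ℕ → ℂ) (h0 : f 0 = 0) :
    ∑ I ∈ Finset.Icc 1 m, f I = ∑ I ∈ Finset.range (m+1), f I := by
  apply Finset.sum_subset
  · intro x hx
    have := Finset.mem_Icc.mp hx
    exact Finset.mem_range.mpr (by omega)
  · intro x hx hnx
    have hxr := Finset.mem_range.mp hx
    have : x = 0 := by
      by_contra h
      exact hnx (Finset.mem_Icc.mpr (by omega))
    rw [this, h0]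

lemma V1' (m : ℕ) (hm : 1 ≤ m) (x y : ℂ) :
    ∑ I ∈ Finset.range (m+1), (I:ℂ) * (bc x I * bc y (m-I)) = x * bc (x+y-1) (m-1) := by
  obtain ⟨J, rfl⟩ : ∃ J, m = J+1 := ⟨m-1, by omega⟩
  have h := bc_vandermonde_w J x y
  simpa using h

lemma V2 (m : ℕ) (hm : 1 ≤ m) (x y : ℂ) :
    ∑ I ∈ Finset.range (m+1), ((I:ℂ)+1) * (bc x I * bc y (m-I))
      = x * bc (x+y-1) (m-1) + bc (x+y) m := by
  have e : ∀ I ∈ Finset.range (m+1), ((I:ℂ)+1) * (bc x I * bc y (m-I))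
      = (I:ℂ) * (bc x I * bc y (m-I)) + bc x I * bc y (m-I) := by
    intro I _; ring
  rw [Finset.sum_congr rfl e, Finset.sum_add_distrib, V1' m hm x y, bc_vandermonde m x y]

section Core

open PowerSeries

variable (a b : ℂ) (F : PowerSeries ℂ)

def Lam (k I : ℕ) : PowerSeries ℂ :=
  PowerSeries.mk fun n => bc (a*(n:ℂ) + b*(k:ℂ)) I * PowerSeries.coeff n (F^k)

def psi (m k : ℕ) : PowerSeries ℂ :=
  PowerSeries.mk fun n =>
    ((k:ℂ)/((m+k : ℕ):ℂ)) * (bc (a*(n:ℂ) + b*((m+k : ℕ):ℂ)) m * PowerSeries.coeff n (F^(m+k)))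

@[simp] lemma coeff_Lam (k I n : ℕ) :
    PowerSeries.coeff n (Lam a b F k I) = bc (a*(n:ℂ) + b*(k:ℂ)) I * PowerSeries.coeff n (F^k) := by
  rw [Lam, PowerSeries.coeff_mk]

@[simp] lemma coeff_psi (m k n : ℕ) :
    PowerSeries.coeff n (psi a b F m k)
      = ((k:ℂ)/((m+k : ℕ):ℂ)) * (bc (a*(n:ℂ) + b*((m+k : ℕ):ℂ)) m * PowerSeries.coeff n (F^(m+k))) := by
  rw [psi, PowerSeries.coeff_mk]

/-- linear-weight convolution -/
lemma conv_lin (k m n : ℕ) (hk : 1 ≤ k) (c : ℂ) :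
    ∑ p ∈ Finset.HasAntidiagonal.antidiagonal n,
        (PowerSeries.coeff p.1 (F^k) * PowerSeries.coeff p.2 (F^m)) * (a*(p.1:ℂ) + c)
      = ((k:ℂ)*a*(n:ℂ)/((m:ℂ)+(k:ℂ)) + c) * PowerSeries.coeff n (F^(k+m)) := by
  have hmk : ((m:ℂ)+(k:ℂ)) ≠ 0 := by
    have : ((m+k : ℕ):ℂ) ≠ 0 := Nat.cast_ne_zero.mpr (by omega)
    push_cast at this; exact this
  have e : ∀ p ∈ Finset.HasAntidiagonal.antidiagonal n,
      (PowerSeries.coeff p.1 (F^k) * PowerSeries.coeff p.2 (F^m)) * (a*(p.1:ℂ) + c)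
        = a * ((p.1:ℂ) * (PowerSeries.coeff p.1 (F^k) * PowerSeries.coeff p.2 (F^m)))
          + c * (PowerSeries.coeff p.1 (F^k) * PowerSeries.coeff p.2 (F^m)) := by
    intro p _; ring
  rw [Finset.sum_congr rfl e, Finset.sum_add_distrib, ← Finset.mul_sum, ← Finset.mul_sum,
    conv_P F k m n]
  have h2 := conv_xd F k m n hk
  have h3 : ∑ p ∈ Finset.HasAntidiagonal.antidiagonal n,
      (p.1:ℂ) * (PowerSeries.coeff p.1 (F^k) * PowerSeries.coeff p.2 (F^m))
      = (k:ℂ) * (n:ℂ) * PowerSeries.coeff n (F^(k+m)) / ((m:ℂ)+(k:ℂ)) := by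
    rw [eq_div_iff hmk]
    linear_combination h2
  rw [h3]
  field_simp

end Core

section Core2

open PowerSeries

variable (a b : ℂ) (F : PowerSeries ℂ)

lemma cast_ne_zero_of_pos {m : ℕ} (hm : 1 ≤ m) : ((m:ℕ):ℂ) ≠ 0 :=
  Nat.cast_ne_zero.mpr (by omega)

/-- the recurrence for ψ (Lemma L1) -/
lemma L1 (m k : ℕ) (hm : 1 ≤ m) (hk : 1 ≤ k) :
    (∑ I ∈ Finset.Icc 1 m, Lam a b F k I * psi a b F (m-I) I) = psi a b F m k := by
  have hmC : ((m:ℕ):ℂ) ≠ 0 := cast_ne_zero_of_pos hm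
  have hmkC : ((m:ℂ)+(k:ℂ)) ≠ 0 := by
    have : ((m+k : ℕ):ℂ) ≠ 0 := Nat.cast_ne_zero.mpr (by omega)
    push_cast at this; exact this
  ext n
  rw [map_sum]
  have step1 : ∀ I ∈ Finset.Icc 1 m,
      (PowerSeries.coeff n) (Lam a b F k I * psi a b F (m-I) I)
        = ∑ p ∈ Finset.HasAntidiagonal.antidiagonal n,
            (PowerSeries.coeff p.1 (F^k) * PowerSeries.coeff p.2 (F^m))
              * ((I:ℂ) * (bc (a*(p.1:ℂ)+b*(k:ℂ)) I * bc (a*(p.2:ℂ)+b*((m:ℕ):ℂ)) (m-I))) / ((m:ℕ):ℂ) := by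
    intro I hI
    obtain ⟨hI1, hIm⟩ := Finset.mem_Icc.mp hI
    rw [PowerSeries.coeff_mul]
    apply Finset.sum_congr rfl
    intro p _
    rw [coeff_Lam, coeff_psi, show m - I + I = m from by omega]
    field_simp
  rw [Finset.sum_congr rfl step1, Finset.sum_comm]
  have step2 : ∀ p ∈ Finset.HasAntidiagonal.antidiagonal n,
      (∑ I ∈ Finset.Icc 1 m,
        (PowerSeries.coeff p.1 (F^k) * PowerSeries.coeff p.2 (F^m))
          * ((I:ℂ) * (bc (a*(p.1:ℂ)+b*(k:ℂ)) I * bc (a*(p.2:ℂ)+b*((m:ℕ):ℂ)) (m-I))) / ((m:ℕ):ℂ))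
      = (PowerSeries.coeff p.1 (F^k) * PowerSeries.coeff p.2 (F^m))
          * (a*(p.1:ℂ)+b*(k:ℂ)) * bc (a*(n:ℂ) + b*((m+k:ℕ):ℂ) - 1) (m-1) / ((m:ℕ):ℂ) := by
    intro p hp
    have hp12 : p.1 + p.2 = n := Finset.HasAntidiagonal.mem_antidiagonal.mp hp
    rw [← Finset.sum_div]
    rw [show ∀ (s : Finset ℕ) (f : ℕ → ℂ), (∑ I ∈ s, (PowerSeries.coeff p.1 (F^k) * PowerSeries.coeff p.2 (F^m)) * f I) = (PowerSeries.coeff p.1 (F^k) * PowerSeries.coeff p.2 (F^m)) * ∑ I ∈ s, f I from fun s f => by rw [← Finset.mul_sum]]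
    rw [sum_Icc1_eq_range m _ (by simp), V1' m hm]
    have ecast : a*(p.1:ℂ)+b*(k:ℂ) + (a*(p.2:ℂ)+b*((m:ℕ):ℂ)) - 1 = a*(n:ℂ) + b*((m+k:ℕ):ℂ) - 1 := by
      have : ((p.1:ℂ)) + ((p.2:ℂ)) = ((n:ℕ):ℂ) := by
        rw [← Nat.cast_add, hp12]
      push_cast at this ⊢
      linear_combination a * this
    rw [ecast]
    ring
  rw [Finset.sum_congr rfl step2]
  have step3 : ∀ p ∈ Finset.HasAntidiagonal.antidiagonal n,
      (PowerSeries.coeff p.1 (F^k) * PowerSeries.coeff p.2 (F^m))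
          * (a*(p.1:ℂ)+b*(k:ℂ)) * bc (a*(n:ℂ) + b*((m+k:ℕ):ℂ) - 1) (m-1) / ((m:ℕ):ℂ)
      = ((PowerSeries.coeff p.1 (F^k) * PowerSeries.coeff p.2 (F^m)) * (a*(p.1:ℂ)+b*(k:ℂ)))
          * (bc (a*(n:ℂ) + b*((m+k:ℕ):ℂ) - 1) (m-1) / ((m:ℕ):ℂ)) := by
    intro p _; ring
  rw [Finset.sum_congr rfl step3, ← Finset.sum_mul, conv_lin a F k m n hk (b*(k:ℂ)), coeff_psi]
  -- final scalar identity
  have habs : ((m:ℕ):ℂ) * bc (a*(n:ℂ) + b*((m+k:ℕ):ℂ)) m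
      = (a*(n:ℂ) + b*((m+k:ℕ):ℂ)) * bc (a*(n:ℂ) + b*((m+k:ℕ):ℂ) - 1) (m-1) := by
    obtain ⟨m', rfl⟩ : ∃ m', m = m'+1 := ⟨m-1, by omega⟩
    have h := bc_absorb (a*(n:ℂ) + b*((m'+1+k:ℕ):ℂ)) m'
    simpa using h
  have hcast : ((m+k:ℕ):ℂ) = (m:ℂ) + (k:ℂ) := by push_cast; ring
  rw [show k + m = m + k from Nat.add_comm k m]
  rw [hcast] at habs ⊢
  generalize bc (a*(n:ℂ) + b*((m:ℂ)+(k:ℂ)) - 1) (m-1) = C at habs ⊢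
  generalize bc (a*(n:ℂ) + b*((m:ℂ)+(k:ℂ))) m = D at habs ⊢
  have hD : D = (a*(n:ℂ) + b*((m:ℂ)+(k:ℂ))) * C / (m:ℂ) := by
    field_simp
    linear_combination habs
  subst hD
  field_simp

end Core2

section Core3

open PowerSeries

variable (a b : ℂ) (F : PowerSeries ℂ)

lemma L2scalar (M J An B C D X : ℂ) (hM : M ≠ 0) (hM1 : M+1 ≠ 0) (hK : M+J+1 ≠ 0)
    (habs : M * D = (An + B*(M+J+1)) * C) :
    (J*An/(M+J+1) + B*J) * X * (C/(M+1)) + X * (D/(M+1)) = (J+1)/(M+J+1) * (D * X) := by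
  have hD : D = (An + B*(M+J+1))*C/M := by
    field_simp
    linear_combination habs
  subst hD
  field_simp
  ring

lemma L2' (μ j : ℕ) (hμ : 1 ≤ μ) (hj : 1 ≤ j) :
    Lam a b F j 0 * psi a b F μ 1
        + ∑ I ∈ Finset.Icc 1 μ, Lam a b F j I * psi a b F (μ-I) (I+1)
      = psi a b F μ (j+1) := by
  have hμ1 : ((μ+1:ℕ):ℂ) ≠ 0 := Nat.cast_ne_zero.mpr (by omega)
  have hμC : ((μ:ℕ):ℂ) ≠ 0 := cast_ne_zero_of_pos hμ
  have hins : Finset.range (μ+1) = insert 0 (Finset.Icc 1 μ) := by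
    ext z; simp only [Finset.mem_range, Finset.mem_insert, Finset.mem_Icc]; omega
  ext n
  rw [map_add, map_sum]
  set PP : ℕ × ℕ → ℂ := fun p => PowerSeries.coeff p.1 (F^j) * PowerSeries.coeff p.2 (F^(μ+1)) with hPP
  set g : ℕ → ℂ := fun I => ∑ p ∈ Finset.HasAntidiagonal.antidiagonal n,
      PP p * (((I:ℂ)+1) * (bc (a*(p.1:ℂ)+b*(j:ℂ)) I * bc (a*(p.2:ℂ)+b*((μ+1:ℕ):ℂ)) (μ-I))) / ((μ+1:ℕ):ℂ)
    with hg
  have lhs0 : (PowerSeries.coeff n) (Lam a b F j 0 * psi a b F μ 1) = g 0 := by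
    rw [PowerSeries.coeff_mul, hg]
    apply Finset.sum_congr rfl
    intro p _
    rw [coeff_Lam, coeff_psi]
    simp only [Nat.cast_one, Nat.cast_zero, bc_zero, Nat.sub_zero, zero_add]
    field_simp [hPP]
    ring
  have lhsI : ∀ I ∈ Finset.Icc 1 μ,
      (PowerSeries.coeff n) (Lam a b F j I * psi a b F (μ-I) (I+1)) = g I := by
    intro I hI
    obtain ⟨hI1, hIμ⟩ := Finset.mem_Icc.mp hI
    rw [PowerSeries.coeff_mul, hg]
    apply Finset.sum_congr rfl
    intro p _
    rw [coeff_Lam, coeff_psi, show μ - I + (I+1) = μ+1 from by omega]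
    have e2 : ((I+1 : ℕ):ℂ) = (I:ℂ)+1 := by push_cast; ring
    rw [e2]
    field_simp [hPP]
    ring
  rw [lhs0, Finset.sum_congr rfl lhsI, ← Finset.sum_insert (show (0:ℕ) ∉ Finset.Icc 1 μ by simp),
    ← hins]
  -- now LHS = ∑_{I ∈ range (μ+1)} g I ; swap sums
  rw [hg, Finset.sum_comm]
  set T : ℂ := a*(n:ℂ) + b*((μ+(j+1) : ℕ):ℂ) with hT
  have step2 : ∀ p ∈ Finset.HasAntidiagonal.antidiagonal n,
      (∑ I ∈ Finset.range (μ+1),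
        PP p * (((I:ℂ)+1) * (bc (a*(p.1:ℂ)+b*(j:ℂ)) I * bc (a*(p.2:ℂ)+b*((μ+1:ℕ):ℂ)) (μ-I))) / ((μ+1:ℕ):ℂ))
      = PP p * ((a*(p.1:ℂ)+b*(j:ℂ)) * bc (T-1) (μ-1) + bc T μ) / ((μ+1:ℕ):ℂ) := by
    intro p hp
    have hp12 : p.1 + p.2 = n := Finset.HasAntidiagonal.mem_antidiagonal.mp hp
    rw [← Finset.sum_div, ← Finset.mul_sum, V2 μ hμ]
    have ecast : (a*(p.1:ℂ)+b*(j:ℂ)) + (a*(p.2:ℂ)+b*((μ+1:ℕ):ℂ)) = T := by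
      have hpc : ((p.1:ℂ)) + ((p.2:ℂ)) = ((n:ℕ):ℂ) := by rw [← Nat.cast_add, hp12]
      rw [hT]
      push_cast at hpc ⊢
      linear_combination a * hpc
    rw [ecast]
  rw [Finset.sum_congr rfl step2]
  have step3 : ∀ p ∈ Finset.HasAntidiagonal.antidiagonal n,
      PP p * ((a*(p.1:ℂ)+b*(j:ℂ)) * bc (T-1) (μ-1) + bc T μ) / ((μ+1:ℕ):ℂ)
      = (PP p * (a*(p.1:ℂ)+b*(j:ℂ))) * (bc (T-1) (μ-1) / ((μ+1:ℕ):ℂ))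
        + PP p * (bc T μ / ((μ+1:ℕ):ℂ)) := by
    intro p _; ring
  rw [Finset.sum_congr rfl step3, Finset.sum_add_distrib, ← Finset.sum_mul, ← Finset.sum_mul,
    hPP]
  rw [conv_lin a F j (μ+1) n hj (b*(j:ℂ))]
  have hconvP := conv_P F j (μ+1) n
  rw [hconvP]
  rw [coeff_psi]
  -- final scalar identity
  rw [show j + (μ+1) = μ+(j+1) from by omega]
  have habs : ((μ:ℕ):ℂ) * bc T μ = T * bc (T-1) (μ-1) := by
    obtain ⟨μ', rfl⟩ : ∃ μ', μ = μ'+1 := ⟨μ-1, by omega⟩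
    simpa using bc_absorb T μ'
  rw [hT] at habs ⊢
  have hcast1 : ((μ+1:ℕ):ℂ) = (μ:ℂ) + 1 := by push_cast; ring
  have hcast2 : ((μ+(j+1):ℕ):ℂ) = (μ:ℂ) + (j:ℂ) + 1 := by push_cast; ring
  simp only [hcast1, hcast2] at habs ⊢
  have hKC : ((μ:ℂ)+(j:ℂ)+1) ≠ 0 := by
    have h9 : ((μ+(j+1):ℕ):ℂ) ≠ 0 := Nat.cast_ne_zero.mpr (by omega)
    rw [hcast2] at h9; exact h9
  have hμ1' : ((μ:ℂ)+1) ≠ 0 := by rw [← hcast1]; exact hμ1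
  have he2 : ((μ:ℂ)+1) + (j:ℂ) = (μ:ℂ) + (j:ℂ) + 1 := by ring
  rw [he2]
  push_cast
  have key := L2scalar (μ:ℂ) (j:ℂ) (a*(n:ℂ)) b
      (bc (a*(n:ℂ) + b*((μ:ℂ)+(j:ℂ)+1) - 1) (μ-1)) (bc (a*(n:ℂ) + b*((μ:ℂ)+(j:ℂ)+1)) μ)
      (PowerSeries.coeff n (F^(μ+(j+1)))) hμC hμ1' hKC habs
  linear_combination key

end Core3

section Core4

open PowerSeries

variable (a b : ℂ) (F : PowerSeries ℂ)

lemma Lam_zero (k : ℕ) : Lam a b F k 0 = F^k := by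
  ext n; rw [coeff_Lam]; simp

lemma psi_zero (k : ℕ) (hk : 1 ≤ k) : psi a b F 0 k = F^k := by
  ext n
  rw [coeff_psi]
  have h1 : ((0+k : ℕ):ℂ) = (k:ℂ) := by push_cast; ring
  have h2 : ((k:ℂ)) ≠ 0 := cast_ne_zero_of_pos hk
  rw [h1, div_self h2, bc_zero, one_mul, one_mul, Nat.zero_add]

lemma L2 : ∀ μ j : ℕ, 1 ≤ j →
    (∑ m ∈ Finset.range (μ+1), psi a b F m j * psi a b F (μ-m) 1) = psi a b F μ (j+1) := by
  intro μ
  induction μ using Nat.strong_induction_on with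
  | _ μ ih =>
    intro j hj
    rcases Nat.eq_zero_or_pos μ with h0 | hpos
    · subst h0
      simp only [Nat.zero_add, Finset.range_one, Finset.sum_singleton, Nat.sub_zero]
      rw [psi_zero a b F j hj, psi_zero a b F 1 le_rfl, psi_zero a b F (j+1) (by omega),
        ← pow_add]
    · have hins : Finset.range (μ+1) = insert 0 (Finset.Icc 1 μ) := by
        ext z; simp only [Finset.mem_range, Finset.mem_insert, Finset.mem_Icc]; omega
      rw [hins, Finset.sum_insert (show (0:ℕ) ∉ Finset.Icc 1 μ by simp)]
      rw [Nat.sub_zero, psi_zero a b F j hj, ← Lam_zero a b F j]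
      have expand : ∀ m ∈ Finset.Icc 1 μ, psi a b F m j * psi a b F (μ-m) 1
          = ∑ I ∈ Finset.Icc 1 m, (Lam a b F j I * psi a b F (m-I) I) * psi a b F (μ-m) 1 := by
        intro m hm
        obtain ⟨hm1, hmμ⟩ := Finset.mem_Icc.mp hm
        rw [← L1 a b F m j hm1 hj, Finset.sum_mul]
      rw [Finset.sum_congr rfl expand]
      -- triangle swap
      have swap : ∑ m ∈ Finset.Icc 1 μ, ∑ I ∈ Finset.Icc 1 m,
            (Lam a b F j I * psi a b F (m-I) I) * psi a b F (μ-m) 1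
          = ∑ I ∈ Finset.Icc 1 μ, ∑ m ∈ Finset.Icc I μ,
            (Lam a b F j I * psi a b F (m-I) I) * psi a b F (μ-m) 1 := by
        have eIcc : ∀ (u v : ℕ), Finset.Icc u v = Finset.Ico u (v+1) := fun u v =>
          (Finset.Ico_add_one_right_eq_Icc u v).symm
        calc ∑ m ∈ Finset.Icc 1 μ, ∑ I ∈ Finset.Icc 1 m,
              (Lam a b F j I * psi a b F (m-I) I) * psi a b F (μ-m) 1
            = ∑ m ∈ Finset.Ico 1 (μ+1), ∑ I ∈ Finset.Ico 1 (m+1),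
              (Lam a b F j I * psi a b F (m-I) I) * psi a b F (μ-m) 1 := by
              rw [← eIcc]
              exact Finset.sum_congr rfl fun m _ => by rw [← eIcc]
          _ = ∑ I ∈ Finset.Ico 1 (μ+1), ∑ m ∈ Finset.Ico I (μ+1),
              (Lam a b F j I * psi a b F (m-I) I) * psi a b F (μ-m) 1 := by
              rw [← Finset.sum_Ico_Ico_comm]
          _ = ∑ I ∈ Finset.Icc 1 μ, ∑ m ∈ Finset.Icc I μ,
              (Lam a b F j I * psi a b F (m-I) I) * psi a b F (μ-m) 1 := by
              rw [← eIcc]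
              exact Finset.sum_congr rfl fun I _ => by rw [← eIcc]
      rw [swap]
      have inner : ∀ I ∈ Finset.Icc 1 μ,
          (∑ m ∈ Finset.Icc I μ, (Lam a b F j I * psi a b F (m-I) I) * psi a b F (μ-m) 1)
            = Lam a b F j I * psi a b F (μ-I) (I+1) := by
        intro I hI
        obtain ⟨hI1, hIμ⟩ := Finset.mem_Icc.mp hI
        have reidx : ∑ m ∈ Finset.Icc I μ, (Lam a b F j I * psi a b F (m-I) I) * psi a b F (μ-m) 1
            = ∑ m' ∈ Finset.range ((μ-I)+1), (Lam a b F j I * psi a b F m' I) * psi a b F ((μ-I)-m') 1 := by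
          rw [show Finset.Icc I μ = Finset.Ico I (μ+1) from (Finset.Ico_add_one_right_eq_Icc I μ).symm,
            Finset.sum_Ico_eq_sum_range, show μ + 1 - I = (μ-I)+1 from by omega]
          apply Finset.sum_congr rfl
          intro m' _
          rw [show I + m' - I = m' from by omega, show μ - (I + m') = (μ-I)-m' from by omega]
        rw [reidx]
        have : ∑ m' ∈ Finset.range ((μ-I)+1), (Lam a b F j I * psi a b F m' I) * psi a b F ((μ-I)-m') 1
            = Lam a b F j I * ∑ m' ∈ Finset.range ((μ-I)+1), psi a b F m' I * psi a b F ((μ-I)-m') 1 := by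
          rw [Finset.mul_sum]
          apply Finset.sum_congr rfl
          intro m' _; ring
        rw [this, ih (μ-I) (by omega) I hI1]
      rw [Finset.sum_congr rfl inner]
      exact L2' a b F μ j hpos hj

end Core4

section Core5

open PowerSeries

variable (a b : ℂ) (F : PowerSeries ℂ)

def Theta (j : ℕ) : PowerSeries ℂ :=
  PowerSeries.mk fun n => ∑ m ∈ Finset.range (n+1), PowerSeries.coeff n (psi a b F m j)

@[simp] lemma coeff_Theta (j n : ℕ) :
    PowerSeries.coeff n (Theta a b F j)
      = ∑ m ∈ Finset.range (n+1), PowerSeries.coeff n (psi a b F m j) := by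
  rw [Theta, PowerSeries.coeff_mk]

lemma coeff_psi_vanish (hF : PowerSeries.constantCoeff F = 0) {m k n : ℕ} (h : n < m + k) :
    PowerSeries.coeff n (psi a b F m k) = 0 := by
  rw [coeff_psi, coeff_pow_eq_zero F hF (m+k) n h, mul_zero, mul_zero]

lemma coeff_Theta_ext (hF : PowerSeries.constantCoeff F = 0) (j n M : ℕ) (hM : n ≤ M) :
    PowerSeries.coeff n (Theta a b F j)
      = ∑ m ∈ Finset.range (M+1), PowerSeries.coeff n (psi a b F m j) := by
  rw [coeff_Theta]
  apply Finset.sum_subset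
  · intro z hz
    exact Finset.mem_range.mpr (by have := Finset.mem_range.mp hz; omega)
  · intro z hz hnz
    have hzn : n < z := by
      have := Finset.mem_range.mp hz
      by_contra hc
      exact hnz (Finset.mem_range.mpr (by omega))
    exact coeff_psi_vanish a b F hF (by omega)

/-- reindex a square sum with vanishing upper triangle into antidiagonal strips -/
lemma sq_antidiag (n : ℕ) (f : ℕ → ℕ → ℂ) (hf : ∀ u v, n < u + v → f u v = 0) :
    ∑ u ∈ Finset.range (n+1), ∑ v ∈ Finset.range (n+1), f u v
      = ∑ μ ∈ Finset.range (n+1), ∑ m ∈ Finset.range (μ+1), f m (μ-m) := by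
  have h1 : ∀ μ : ℕ, ∑ m ∈ Finset.range (μ+1), f m (μ-m)
      = ∑ p ∈ Finset.HasAntidiagonal.antidiagonal μ, f p.1 p.2 := by
    intro μ
    rw [Finset.Nat.sum_antidiagonal_eq_sum_range_succ_mk]
  have hdisj : (Finset.range (n+1) : Set ℕ).PairwiseDisjoint Finset.HasAntidiagonal.antidiagonal := by
    intro u _ v _ huv
    simp only [Function.onFun, Finset.disjoint_left]
    intro p hpu hpv
    exact huv ((Finset.HasAntidiagonal.mem_antidiagonal.mp hpu).symm.trans (Finset.HasAntidiagonal.mem_antidiagonal.mp hpv))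
  rw [Finset.sum_congr rfl (fun μ _ => h1 μ), ← Finset.sum_biUnion hdisj]
  rw [← Finset.sum_product']
  symm
  apply Finset.sum_subset
  · intro p hp
    obtain ⟨μ, hμ, hpμ⟩ := Finset.mem_biUnion.mp hp
    have hμn := Finset.mem_range.mp hμ
    have := Finset.HasAntidiagonal.mem_antidiagonal.mp hpμ
    exact Finset.mem_product.mpr ⟨Finset.mem_range.mpr (by omega), Finset.mem_range.mpr (by omega)⟩
  · intro p hp hnp
    apply hf
    by_contra hc
    push_neg at hc
    exact hnp (Finset.mem_biUnion.mpr ⟨p.1 + p.2, Finset.mem_range.mpr (by omega),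
      Finset.HasAntidiagonal.mem_antidiagonal.mpr rfl⟩)

lemma theta_mul (hF : PowerSeries.constantCoeff F = 0) (j : ℕ) (hj : 1 ≤ j) :
    Theta a b F j * Theta a b F 1 = Theta a b F (j+1) := by
  ext n
  rw [PowerSeries.coeff_mul]
  have step1 : ∀ p ∈ Finset.HasAntidiagonal.antidiagonal n,
      PowerSeries.coeff p.1 (Theta a b F j) * PowerSeries.coeff p.2 (Theta a b F 1)
        = ∑ m ∈ Finset.range (n+1), ∑ m' ∈ Finset.range (n+1),
            PowerSeries.coeff p.1 (psi a b F m j) * PowerSeries.coeff p.2 (psi a b F m' 1) := by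
    intro p hp
    have hpn := Finset.HasAntidiagonal.mem_antidiagonal.mp hp
    rw [coeff_Theta_ext a b F hF j p.1 n (by omega), coeff_Theta_ext a b F hF 1 p.2 n (by omega),
      Finset.sum_mul]
    apply Finset.sum_congr rfl
    intro m _
    rw [Finset.mul_sum]
  rw [Finset.sum_congr rfl step1, Finset.sum_comm]
  have step2 : ∀ m ∈ Finset.range (n+1),
      (∑ p ∈ Finset.HasAntidiagonal.antidiagonal n, ∑ m' ∈ Finset.range (n+1),
        PowerSeries.coeff p.1 (psi a b F m j) * PowerSeries.coeff p.2 (psi a b F m' 1))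
      = ∑ m' ∈ Finset.range (n+1),
          PowerSeries.coeff n (psi a b F m j * psi a b F m' 1) := by
    intro m _
    rw [Finset.sum_comm]
    apply Finset.sum_congr rfl
    intro m' _
    rw [PowerSeries.coeff_mul]
  rw [Finset.sum_congr rfl step2]
  rw [sq_antidiag n (fun m m' => PowerSeries.coeff n (psi a b F m j * psi a b F m' 1))
    (by
      intro u v huv
      show PowerSeries.coeff n (psi a b F u j * psi a b F v 1) = 0
      rw [PowerSeries.coeff_mul]
      apply Finset.sum_eq_zero
      intro p hp
      have hpn := Finset.HasAntidiagonal.mem_antidiagonal.mp hp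
      by_cases hcase : p.1 < u + j
      · rw [coeff_psi_vanish a b F hF hcase, zero_mul]
      · rw [coeff_psi_vanish a b F hF (show p.2 < v + 1 from by omega), mul_zero])]
  rw [coeff_Theta]
  apply Finset.sum_congr rfl
  intro μ _
  rw [← L2 a b F μ j hj, map_sum]

lemma theta_pow (hF : PowerSeries.constantCoeff F = 0) (j : ℕ) (hj : 1 ≤ j) :
    (Theta a b F 1)^j = Theta a b F j := by
  induction j with
  | zero => omega
  | succ j ih =>
    rcases Nat.eq_zero_or_pos j with h0 | hpos
    · subst h0; rw [pow_one]
    · rw [pow_succ, ih hpos, theta_mul a b F hF j hpos]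

end Core5

section Eval

open PowerSeries

lemma bc_zero_eq_zero {k : ℕ} (hk : 1 ≤ k) : bc 0 k = 0 := by
  rw [bc, div_eq_zero_iff]
  left
  apply Finset.prod_eq_zero (i := 0) (Finset.mem_range.mpr hk)
  simp

def evalAt (S : PowerSeries ℂ) (p : ℕ → ℂ) : PowerSeries ℂ :=
  PowerSeries.mk fun n => ∑ k ∈ Finset.range (n+1), p k * PowerSeries.coeff n (S^k)

@[simp] lemma coeff_evalAt (S : PowerSeries ℂ) (p : ℕ → ℂ) (n : ℕ) :
    PowerSeries.coeff n (evalAt S p)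
      = ∑ k ∈ Finset.range (n+1), p k * PowerSeries.coeff n (S^k) := by
  rw [evalAt, PowerSeries.coeff_mk]

lemma coeff_evalAt_ext (S : PowerSeries ℂ) (hS : PowerSeries.constantCoeff S = 0)
    (p : ℕ → ℂ) (n M : ℕ) (hM : n ≤ M) :
    PowerSeries.coeff n (evalAt S p)
      = ∑ k ∈ Finset.range (M+1), p k * PowerSeries.coeff n (S^k) := by
  rw [coeff_evalAt]
  apply Finset.sum_subset
  · intro z hz; exact Finset.mem_range.mpr (by have := Finset.mem_range.mp hz; omega)
  · intro z hz hnz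
    have hzn : n < z := by
      by_contra hc
      exact hnz (Finset.mem_range.mpr (by omega))
    rw [coeff_pow_eq_zero S hS z n hzn, mul_zero]

lemma evalAt_mul (S : PowerSeries ℂ) (hS : PowerSeries.constantCoeff S = 0) (p q : ℕ → ℂ) :
    evalAt S p * evalAt S q = evalAt S (fun m => ∑ i ∈ Finset.range (m+1), p i * q (m-i)) := by
  ext n
  rw [PowerSeries.coeff_mul]
  have step1 : ∀ pr ∈ Finset.HasAntidiagonal.antidiagonal n,
      PowerSeries.coeff pr.1 (evalAt S p) * PowerSeries.coeff pr.2 (evalAt S q)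
        = ∑ k ∈ Finset.range (n+1), ∑ l ∈ Finset.range (n+1),
            (p k * PowerSeries.coeff pr.1 (S^k)) * (q l * PowerSeries.coeff pr.2 (S^l)) := by
    intro pr hpr
    have hprn := Finset.HasAntidiagonal.mem_antidiagonal.mp hpr
    rw [coeff_evalAt_ext S hS p pr.1 n (by omega), coeff_evalAt_ext S hS q pr.2 n (by omega),
      Finset.sum_mul]
    exact Finset.sum_congr rfl fun k _ => by rw [Finset.mul_sum]
  rw [Finset.sum_congr rfl step1, Finset.sum_comm]
  have step2 : ∀ k ∈ Finset.range (n+1),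
      (∑ pr ∈ Finset.HasAntidiagonal.antidiagonal n, ∑ l ∈ Finset.range (n+1),
        (p k * PowerSeries.coeff pr.1 (S^k)) * (q l * PowerSeries.coeff pr.2 (S^l)))
      = ∑ l ∈ Finset.range (n+1), (p k * q l) * PowerSeries.coeff n (S^(k+l)) := by
    intro k _
    rw [Finset.sum_comm]
    apply Finset.sum_congr rfl
    intro l _
    rw [← conv_P S k l n, Finset.mul_sum]
    exact Finset.sum_congr rfl fun pr _ => by ring
  rw [Finset.sum_congr rfl step2]
  rw [sq_antidiag n (fun k l => (p k * q l) * PowerSeries.coeff n (S^(k+l)))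
    (by
      intro u v huv
      show (p u * q v) * PowerSeries.coeff n (S^(u+v)) = 0
      rw [coeff_pow_eq_zero S hS (u+v) n huv, mul_zero])]
  rw [coeff_evalAt]
  apply Finset.sum_congr rfl
  intro m _
  rw [Finset.sum_mul]
  apply Finset.sum_congr rfl
  intro i hi
  have him := Finset.mem_range.mp hi
  rw [show i + (m - i) = m from by omega]

def Bin (c : ℂ) (S : PowerSeries ℂ) : PowerSeries ℂ := evalAt S (fun k => bc c k)

lemma Bin_mul (S : PowerSeries ℂ) (hS : PowerSeries.constantCoeff S = 0) (c d : ℂ) :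
    Bin c S * Bin d S = Bin (c+d) S := by
  rw [Bin, Bin, Bin, evalAt_mul S hS]
  ext n
  rw [coeff_evalAt, coeff_evalAt]
  apply Finset.sum_congr rfl
  intro m _
  rw [bc_vandermonde m c d]

lemma Bin_zero (S : PowerSeries ℂ) : Bin 0 S = 1 := by
  ext n
  rw [Bin, coeff_evalAt]
  rw [Finset.sum_eq_single 0]
  · simp
  · intro k _ hk
    rw [bc_zero_eq_zero (by omega), zero_mul]
  · intro h; exact absurd (Finset.mem_range.mpr (by omega)) h

lemma Bin_one (S : PowerSeries ℂ) (hS : PowerSeries.constantCoeff S = 0) :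
    Bin 1 S = 1 + S := by
  ext n
  rw [Bin, coeff_evalAt, map_add]
  rcases Nat.eq_zero_or_pos n with h0 | hpos
  · subst h0
    simp [PowerSeries.coeff_zero_eq_constantCoeff, hS]
  · rw [Finset.sum_eq_single 1]
    · rw [bc_one_one, one_mul, pow_one]
      have : PowerSeries.coeff n (1 : PowerSeries ℂ) = 0 := by
        rw [PowerSeries.coeff_one, if_neg (by omega)]
      rw [this, zero_add]
    · intro k _ hk
      rcases Nat.eq_zero_or_pos k with hk0 | hkpos
      · subst hk0
        rw [pow_zero, PowerSeries.coeff_one, if_neg (by omega), mul_zero]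
      · rw [bc_one_eq_zero (by omega), zero_mul]
    · intro h; exact absurd (Finset.mem_range.mpr (by omega)) h

lemma Bin_nat (S : PowerSeries ℂ) (hS : PowerSeries.constantCoeff S = 0) (N : ℕ) :
    Bin ((N:ℕ):ℂ) S = (1+S)^N := by
  induction N with
  | zero => rw [pow_zero, Nat.cast_zero, Bin_zero]
  | succ N ih =>
    rw [pow_succ, ← ih, ← Bin_one S hS, Bin_mul S hS]
    push_cast
    ring_nf

lemma Bin_pow (S : PowerSeries ℂ) (hS : PowerSeries.constantCoeff S = 0) (c : ℂ) (N : ℕ) :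
    (Bin c S)^N = Bin ((N:ℂ)*c) S := by
  induction N with
  | zero => rw [pow_zero, Nat.cast_zero, zero_mul, Bin_zero]
  | succ N ih =>
    rw [pow_succ, ih, Bin_mul S hS]
    push_cast
    ring_nf

end Eval

section StarE

open PowerSeries

def hfun (c : ℂ) : ℕ → ℂ := fun k => if k = 0 then 0 else bc (c-1) (k-1) / (k:ℂ)

variable (a b : ℂ) (F : PowerSeries ℂ)

lemma theta_one_const (hF : PowerSeries.constantCoeff F = 0) :
    PowerSeries.constantCoeff (Theta a b F 1) = 0 := by
  rw [← PowerSeries.coeff_zero_eq_constantCoeff, coeff_Theta]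
  simp only [Nat.zero_add, Finset.range_one, Finset.sum_singleton]
  exact coeff_psi_vanish a b F hF (by omega)

lemma starE (hF : PowerSeries.constantCoeff F = 0) (c : ℂ) (n : ℕ) (hn : 1 ≤ n) :
    PowerSeries.coeff n (evalAt (Theta a b F 1) (hfun c))
      = ∑ N ∈ Finset.Icc 1 n,
          bc (a*(n:ℂ) + b*(N:ℂ) + c - 1) (N-1) / (N:ℂ) * PowerSeries.coeff n (F^N) := by
  rw [coeff_evalAt]
  rw [← sum_Icc1_eq_range n _ (by simp [hfun])]
  have step1 : ∀ k ∈ Finset.Icc 1 n,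
      hfun c k * PowerSeries.coeff n ((Theta a b F 1)^k)
        = ∑ N ∈ Finset.Icc k n,
            bc (c-1) (k-1) * (bc (a*(n:ℂ) + b*(N:ℂ)) (N-k) * PowerSeries.coeff n (F^N)) / (N:ℂ) := by
    intro k hk
    obtain ⟨hk1, hkn⟩ := Finset.mem_Icc.mp hk
    rw [hfun, if_neg (by omega), theta_pow a b F hF k hk1, coeff_Theta]
    rw [Finset.mul_sum]
    have reidx : ∑ m ∈ Finset.range (n+1),
        bc (c-1) (k-1) / (k:ℂ) * PowerSeries.coeff n (psi a b F m k)
        = ∑ N ∈ Finset.Ico k (k+(n+1)),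
            bc (c-1) (k-1) / (k:ℂ) * PowerSeries.coeff n (psi a b F (N-k) k) := by
      rw [Finset.sum_Ico_eq_sum_range]
      rw [show k + (n+1) - k = n+1 from by omega]
      exact Finset.sum_congr rfl fun m _ => by rw [show k + m - k = m from by omega]
    rw [reidx]
    have trunc : ∑ N ∈ Finset.Icc k n,
        bc (c-1) (k-1) / (k:ℂ) * PowerSeries.coeff n (psi a b F (N-k) k)
        = ∑ N ∈ Finset.Ico k (k+(n+1)),
            bc (c-1) (k-1) / (k:ℂ) * PowerSeries.coeff n (psi a b F (N-k) k) := by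
      apply Finset.sum_subset
      · intro z hz
        obtain ⟨h1, h2⟩ := Finset.mem_Icc.mp hz
        exact Finset.mem_Ico.mpr ⟨h1, by omega⟩
      · intro z hz hnz
        obtain ⟨h1, h2⟩ := Finset.mem_Ico.mp hz
        have hzn : n < z := by
          by_contra hc
          exact hnz (Finset.mem_Icc.mpr (by omega))
        rw [coeff_psi_vanish a b F hF (show n < (z-k)+k from by omega), mul_zero]
    rw [← trunc]
    apply Finset.sum_congr rfl
    intro N hN
    obtain ⟨hNk, hNn⟩ := Finset.mem_Icc.mp hN
    rw [coeff_psi, show N - k + k = N from by omega]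
    have hkC : ((k:ℕ):ℂ) ≠ 0 := cast_ne_zero_of_pos hk1
    have hNC : ((N:ℕ):ℂ) ≠ 0 := cast_ne_zero_of_pos (by omega)
    field_simp
  rw [Finset.sum_congr rfl step1]
  -- triangle swap
  have eIcc : ∀ (u v : ℕ), Finset.Icc u v = Finset.Ico u (v+1) := fun u v =>
    (Finset.Ico_add_one_right_eq_Icc u v).symm
  have swap : ∑ k ∈ Finset.Icc 1 n, ∑ N ∈ Finset.Icc k n,
        bc (c-1) (k-1) * (bc (a*(n:ℂ) + b*(N:ℂ)) (N-k) * PowerSeries.coeff n (F^N)) / (N:ℂ)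
      = ∑ N ∈ Finset.Icc 1 n, ∑ k ∈ Finset.Icc 1 N,
        bc (c-1) (k-1) * (bc (a*(n:ℂ) + b*(N:ℂ)) (N-k) * PowerSeries.coeff n (F^N)) / (N:ℂ) := by
    calc ∑ k ∈ Finset.Icc 1 n, ∑ N ∈ Finset.Icc k n,
          bc (c-1) (k-1) * (bc (a*(n:ℂ) + b*(N:ℂ)) (N-k) * PowerSeries.coeff n (F^N)) / (N:ℂ)
        = ∑ k ∈ Finset.Ico 1 (n+1), ∑ N ∈ Finset.Ico k (n+1),
          bc (c-1) (k-1) * (bc (a*(n:ℂ) + b*(N:ℂ)) (N-k) * PowerSeries.coeff n (F^N)) / (N:ℂ) := by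
          rw [← eIcc]
          exact Finset.sum_congr rfl fun k _ => by rw [← eIcc]
      _ = ∑ N ∈ Finset.Ico 1 (n+1), ∑ k ∈ Finset.Ico 1 (N+1),
          bc (c-1) (k-1) * (bc (a*(n:ℂ) + b*(N:ℂ)) (N-k) * PowerSeries.coeff n (F^N)) / (N:ℂ) := by
          rw [Finset.sum_Ico_Ico_comm]
      _ = ∑ N ∈ Finset.Icc 1 n, ∑ k ∈ Finset.Icc 1 N,
          bc (c-1) (k-1) * (bc (a*(n:ℂ) + b*(N:ℂ)) (N-k) * PowerSeries.coeff n (F^N)) / (N:ℂ) := by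
          rw [← eIcc]
          exact Finset.sum_congr rfl fun N _ => by rw [← eIcc]
  rw [swap]
  apply Finset.sum_congr rfl
  intro N hN
  obtain ⟨hN1, hNn⟩ := Finset.mem_Icc.mp hN
  -- inner Vandermonde
  have inner : ∑ k ∈ Finset.Icc 1 N,
        bc (c-1) (k-1) * (bc (a*(n:ℂ) + b*(N:ℂ)) (N-k) * PowerSeries.coeff n (F^N)) / (N:ℂ)
      = (∑ I ∈ Finset.range ((N-1)+1), bc (c-1) I * bc (a*(n:ℂ) + b*(N:ℂ)) ((N-1)-I))
          * PowerSeries.coeff n (F^N) / (N:ℂ) := by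
    rw [Finset.sum_mul, Finset.sum_div]
    rw [eIcc 1 N, Finset.sum_Ico_eq_sum_range, show N + 1 - 1 = (N-1)+1 from by omega]
    apply Finset.sum_congr rfl
    intro I hI
    have hIN := Finset.mem_range.mp hI
    rw [show 1 + I - 1 = I from by omega, show N - (1+I) = (N-1) - I from by omega]
    ring
  rw [inner, bc_vandermonde (N-1) (c-1) (a*(n:ℂ) + b*(N:ℂ))]
  rw [show c - 1 + (a*(n:ℂ) + b*(N:ℂ)) = a*(n:ℂ) + b*(N:ℂ) + c - 1 from by ring]
  ring

end StarE

section PolyLayer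

open PowerSeries Polynomial

lemma bc_absorb' (r : ℂ) {k : ℕ} (hk : 1 ≤ k) : bc r k = r * bc (r-1) (k-1) / (k:ℂ) := by
  obtain ⟨k', rfl⟩ : ∃ k', k = k'+1 := ⟨k-1, by omega⟩
  have h := bc_absorb r k'
  have hkC : ((k'+1:ℕ):ℂ) ≠ 0 := Nat.cast_ne_zero.mpr (by omega)
  push_cast at hkC ⊢
  rw [eq_div_iff hkC]
  linear_combination h

def bcPoly (m : ℕ) : Polynomial ℂ :=
  Polynomial.C (((m.factorial : ℕ):ℂ))⁻¹ * ∏ j ∈ Finset.range m, (Polynomial.X - Polynomial.C (j:ℂ))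

lemma bcPoly_eval (m : ℕ) (r : ℂ) : (bcPoly m).eval r = bc r m := by
  rw [bcPoly, Polynomial.eval_mul, Polynomial.eval_C, Polynomial.eval_prod, bc, div_eq_mul_inv,
    mul_comm]
  congr 1
  apply Finset.prod_congr rfl
  intro j _
  rw [Polynomial.eval_sub, Polynomial.eval_X, Polynomial.eval_C]

lemma poly_eq_of_nat_eval (P Q : Polynomial ℂ) (h : ∀ m : ℕ, P.eval ((m:ℕ):ℂ) = Q.eval ((m:ℕ):ℂ)) :
    P = Q := by
  apply Polynomial.eq_of_infinite_eval_eq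
  apply Set.Infinite.mono (show Set.range (fun m : ℕ => ((m:ℕ):ℂ)) ⊆ _ from ?_)
  · exact Set.infinite_range_of_injective Nat.cast_injective
  · rintro _ ⟨m, rfl⟩
    exact h m

lemma coeff_one_pos {m : ℕ} (hm : 1 ≤ m) : PowerSeries.coeff m (1 : PowerSeries ℂ) = 0 := by
  rw [PowerSeries.coeff_one, if_neg (by omega)]

/-- coefficient of `Bin` as a sum over `Icc 1 m` (for `m ≥ 1`) -/
lemma coeff_Bin_Icc (S : PowerSeries ℂ) (c : ℂ) {m : ℕ} (hm : 1 ≤ m) :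
    PowerSeries.coeff m (Bin c S)
      = ∑ k ∈ Finset.Icc 1 m, bc c k * PowerSeries.coeff m (S^k) := by
  rw [Bin, coeff_evalAt, ← sum_Icc1_eq_range m _ (by
    rw [pow_zero, coeff_one_pos hm, mul_zero])]

lemma FIN_abstract (γ : ℂ) (hγ : γ ≠ 0) (Wt V : PowerSeries ℂ)
    (hW0 : PowerSeries.constantCoeff Wt = 0) (hV0 : PowerSeries.constantCoeff V = 0)
    (hBV : 1 + V = Bin γ Wt) (lam : ℂ) :
    evalAt V (hfun (lam/γ + 1)) = γ • evalAt Wt (hfun (γ + lam)) := by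
  have PID : ∀ c' : ℂ, evalAt V (hfun (c'+1)) = γ • evalAt Wt (hfun (γ*c'+γ)) := by
    intro c'
    ext m
    rcases Nat.eq_zero_or_pos m with h0 | hm
    · subst h0
      rw [map_smul, coeff_evalAt, coeff_evalAt, smul_eq_mul]
      simp [hfun]
    · rw [map_smul, coeff_evalAt, coeff_evalAt, smul_eq_mul]
      have eL : ∑ k ∈ Finset.range (m+1), hfun (c'+1) k * PowerSeries.coeff m (V^k)
          = ∑ k ∈ Finset.Icc 1 m, bc c' (k-1) / (k:ℂ) * PowerSeries.coeff m (V^k) := by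
        rw [← sum_Icc1_eq_range m _ (by simp [hfun])]
        apply Finset.sum_congr rfl
        intro k hk
        rw [hfun, if_neg (by have := (Finset.mem_Icc.mp hk).1; omega),
          show c' + 1 - 1 = c' from by ring]
      have eR : ∑ k ∈ Finset.range (m+1), hfun (γ*c'+γ) k * PowerSeries.coeff m (Wt^k)
          = ∑ k ∈ Finset.Icc 1 m, bc (γ*c'+(γ-1)) (k-1) / (k:ℂ) * PowerSeries.coeff m (Wt^k) := by
        rw [← sum_Icc1_eq_range m _ (by simp [hfun])]
        apply Finset.sum_congr rfl
        intro k hk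
        rw [hfun, if_neg (by have := (Finset.mem_Icc.mp hk).1; omega),
          show γ*c' + γ - 1 = γ*c'+(γ-1) from by ring]
      rw [eL, eR]
      set PL : Polynomial ℂ :=
        ∑ k ∈ Finset.Icc 1 m,
          Polynomial.C (PowerSeries.coeff m (V^k) * ((k:ℂ))⁻¹) * bcPoly (k-1) with hPLdef
      set PR : Polynomial ℂ :=
        ∑ k ∈ Finset.Icc 1 m,
          Polynomial.C (γ * PowerSeries.coeff m (Wt^k) * ((k:ℂ))⁻¹)
            * ((bcPoly (k-1)).comp (Polynomial.C γ * Polynomial.X + Polynomial.C (γ-1))) with hPRdef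
      have hPL : ∀ r : ℂ, PL.eval r
          = ∑ k ∈ Finset.Icc 1 m, bc r (k-1) / (k:ℂ) * PowerSeries.coeff m (V^k) := by
        intro r
        rw [hPLdef, Polynomial.eval_finset_sum]
        apply Finset.sum_congr rfl
        intro k _
        rw [Polynomial.eval_mul, Polynomial.eval_C, bcPoly_eval]
        field_simp
      have hPR : ∀ r : ℂ, PR.eval r
          = γ * ∑ k ∈ Finset.Icc 1 m, bc (γ*r+(γ-1)) (k-1) / (k:ℂ) * PowerSeries.coeff m (Wt^k) := by
        intro r
        rw [hPRdef, Polynomial.eval_finset_sum, Finset.mul_sum]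
        apply Finset.sum_congr rfl
        intro k _
        rw [Polynomial.eval_mul, Polynomial.eval_C, Polynomial.eval_comp, Polynomial.eval_add,
          Polynomial.eval_mul, Polynomial.eval_C, Polynomial.eval_X, Polynomial.eval_C, bcPoly_eval]
        field_simp
      have hagree : ∀ N : ℕ, PL.eval ((N:ℕ):ℂ) = PR.eval ((N:ℕ):ℂ) := by
        intro N
        rw [hPL, hPR]
        have hN1 : ((N:ℂ)+1) ≠ 0 := Nat.cast_add_one_ne_zero N
        have hcastN : ((N+1:ℕ):ℂ) = (N:ℂ)+1 := by push_cast; ring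
        have kL : ∑ k ∈ Finset.Icc 1 m, bc ((N:ℕ):ℂ) (k-1) / (k:ℂ) * PowerSeries.coeff m (V^k)
            = PowerSeries.coeff m (Bin (((N+1:ℕ)):ℂ) V) / ((N:ℂ)+1) := by
          rw [coeff_Bin_Icc V _ hm, Finset.sum_div]
          apply Finset.sum_congr rfl
          intro k hk
          have hk1 := (Finset.mem_Icc.mp hk).1
          rw [bc_absorb' (((N+1:ℕ)):ℂ) hk1, hcastN,
            show (N:ℂ) + 1 - 1 = (N:ℂ) from by ring]
          have hkC : ((k:ℕ):ℂ) ≠ 0 := cast_ne_zero_of_pos hk1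
          field_simp
        have kR : γ * ∑ k ∈ Finset.Icc 1 m,
              bc (γ*((N:ℕ):ℂ)+(γ-1)) (k-1) / (k:ℂ) * PowerSeries.coeff m (Wt^k)
            = PowerSeries.coeff m (Bin ((((N+1:ℕ)):ℂ)*γ) Wt) / ((N:ℂ)+1) := by
          rw [coeff_Bin_Icc Wt _ hm, Finset.sum_div, Finset.mul_sum]
          apply Finset.sum_congr rfl
          intro k hk
          have hk1 := (Finset.mem_Icc.mp hk).1
          rw [bc_absorb' ((((N+1:ℕ)):ℂ)*γ) hk1, hcastN,
            show ((N:ℂ)+1)*γ - 1 = γ*(N:ℂ)+(γ-1) from by ring]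
          have hkC : ((k:ℕ):ℂ) ≠ 0 := cast_ne_zero_of_pos hk1
          field_simp
        have chain : Bin (((N+1:ℕ)):ℂ) V = Bin ((((N+1:ℕ)):ℂ)*γ) Wt := by
          rw [Bin_nat V hV0 (N+1), hBV, Bin_pow Wt hW0 γ (N+1)]
        rw [kL, kR, chain]
      have hPQ : PL = PR := poly_eq_of_nat_eval _ _ hagree
      have e1 : ∑ k ∈ Finset.Icc 1 m, bc c' (k-1) / (k:ℂ) * PowerSeries.coeff m (V^k)
          = PL.eval c' := (hPL c').symm
      have e2 : γ * ∑ k ∈ Finset.Icc 1 m,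
            bc (γ*c'+(γ-1)) (k-1) / (k:ℂ) * PowerSeries.coeff m (Wt^k) = PR.eval c' :=
        (hPR c').symm
      rw [e1, e2, hPQ]
  have h := PID (lam/γ)
  rw [show γ*(lam/γ) + γ = γ + lam from by field_simp; ring] at h
  exact h

end PolyLayer

end

end BellAux

open BellAux PowerSeries

theorem bell_interpolation_gamma (α β γ : ℝ) (hγ : γ ≠ 0) (x y : ℕ → ℂ)
    (hy : ∀ n, 1 ≤ n →
      y n = ∑ k ∈ Finset.Icc 1 n,
        (∏ j ∈ Finset.range (k - 1), ((α : ℂ) * n + (β : ℂ) * k + (γ : ℂ) - 1 - j)) *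
          bellPoly x n k)
    (lam : ℂ) (n : ℕ) (hn : 1 ≤ n) :
    ∑ k ∈ Finset.Icc 1 n,
        (γ : ℂ) ^ (k - 1) * (∏ j ∈ Finset.range (k - 1), (lam / (γ : ℂ) - j)) *
          bellPoly y n k =
      ∑ k ∈ Finset.Icc 1 n,
        (∏ j ∈ Finset.range (k - 1), ((α : ℂ) * n + (β : ℂ) * k + (γ : ℂ) - 1 + lam - j)) *
          bellPoly x n k := by
  classical
  have hγC : ((γ:ℝ):ℂ) ≠ 0 := by exact_mod_cast hγ
  set F : PowerSeries ℂ :=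
    PowerSeries.mk (fun j => if j = 0 then 0 else x j / (j.factorial : ℂ)) with hFdef
  set Fy : PowerSeries ℂ :=
    PowerSeries.mk (fun j => if j = 0 then 0 else y j / (j.factorial : ℂ)) with hFydef
  have hF : PowerSeries.constantCoeff F = 0 := by
    rw [hFdef, ← PowerSeries.coeff_zero_eq_constantCoeff, PowerSeries.coeff_mk]
    simp
  have hbx : ∀ (m k : ℕ), bellPoly x m k
      = ((m.factorial:ℕ):ℂ)/((k.factorial:ℕ):ℂ) * PowerSeries.coeff m (F^k) := by
    intro m k
    simp only [bellPoly, hFdef]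
  have hby : ∀ (m k : ℕ), bellPoly y m k
      = ((m.factorial:ℕ):ℂ)/((k.factorial:ℕ):ℂ) * PowerSeries.coeff m (Fy^k) := by
    intro m k
    simp only [bellPoly, hFydef]
  set Wt : PowerSeries ℂ := Theta ((α:ℝ):ℂ) ((β:ℝ):ℂ) F 1 with hWtdef
  have hW0 : PowerSeries.constantCoeff Wt = 0 := theta_one_const _ _ _ hF
  set Ys : PowerSeries ℂ := evalAt Wt (hfun ((γ:ℝ):ℂ)) with hYsdef
  -- Step A : Fy = Ys
  have hYs0 : PowerSeries.coeff 0 Ys = 0 := by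
    rw [hYsdef, coeff_evalAt]
    simp [hfun]
  have hFyY : Fy = Ys := by
    ext m
    rcases Nat.eq_zero_or_pos m with h0 | hm
    · subst h0
      rw [hFydef, PowerSeries.coeff_mk, if_pos rfl, hYs0]
    · rw [hYsdef, starE ((α:ℝ):ℂ) ((β:ℝ):ℂ) F hF ((γ:ℝ):ℂ) m hm]
      rw [hFydef, PowerSeries.coeff_mk, if_neg (by omega), hy m hm, Finset.sum_div]
      apply Finset.sum_congr rfl
      intro k hk
      obtain ⟨hk1, hkm⟩ := Finset.mem_Icc.mp hk
      rw [hbx m k, ff_eq_bc (((α:ℝ):ℂ) * m + ((β:ℝ):ℂ) * k + ((γ:ℝ):ℂ) - 1) (k-1)]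
      have hfacts : ((k.factorial:ℕ):ℂ) = (k:ℂ) * (((k-1).factorial:ℕ):ℂ) := by
        conv_lhs => rw [show k = (k-1)+1 from by omega]
        rw [Nat.factorial_succ]
        push_cast [Nat.cast_sub hk1]
        ring
      have h1 : (((k-1).factorial:ℕ):ℂ) ≠ 0 := fact_ne _
      have h2 : ((m.factorial:ℕ):ℂ) ≠ 0 := fact_ne _
      have h3 : ((k:ℕ):ℂ) ≠ 0 := cast_ne_zero_of_pos hk1
      rw [hfacts]
      have harg : ((α:ℝ):ℂ) * m + ((β:ℝ):ℂ) * k + ((γ:ℝ):ℂ) - 1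
          = ((α:ℝ):ℂ) * m + ((β:ℝ):ℂ) * k + ((γ:ℝ):ℂ) - 1 := rfl
      field_simp
  -- Step B : 1 + V = Bin γ W
  set V : PowerSeries ℂ := ((γ:ℝ):ℂ) • Ys with hVdef
  have hV0 : PowerSeries.constantCoeff V = 0 := by
    rw [← PowerSeries.coeff_zero_eq_constantCoeff, hVdef, map_smul, smul_eq_mul, hYs0, mul_zero]
  have hBV : (1 : PowerSeries ℂ) + V = Bin ((γ:ℝ):ℂ) Wt := by
    ext m
    rcases Nat.eq_zero_or_pos m with h0 | hm
    · subst h0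
      rw [map_add, hVdef, map_smul, hYs0, smul_zero, add_zero]
      rw [PowerSeries.coeff_zero_eq_constantCoeff]
      rw [show PowerSeries.constantCoeff (1 : PowerSeries ℂ) = 1 from map_one _]
      rw [Bin, ← PowerSeries.coeff_zero_eq_constantCoeff, coeff_evalAt]
      simp
    · rw [map_add, coeff_one_pos hm, zero_add, hVdef, map_smul, smul_eq_mul,
        coeff_Bin_Icc Wt _ hm, hYsdef, coeff_evalAt,
        ← sum_Icc1_eq_range m _ (by simp [hfun]), Finset.mul_sum]
      apply Finset.sum_congr rfl
      intro k hk
      obtain ⟨hk1, hkm⟩ := Finset.mem_Icc.mp hk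
      rw [hfun, if_neg (by omega), bc_absorb' ((γ:ℝ):ℂ) hk1]
      ring
  -- main computation
  have FIN := FIN_abstract ((γ:ℝ):ℂ) hγC Wt V hW0 hV0 hBV lam
  have stepL : ∀ k ∈ Finset.Icc 1 n,
      ((γ:ℝ):ℂ) ^ (k - 1) * (∏ j ∈ Finset.range (k - 1), (lam / ((γ:ℝ):ℂ) - j)) * bellPoly y n k
        = ((n.factorial:ℕ):ℂ)/((γ:ℝ):ℂ)
            * (hfun (lam/((γ:ℝ):ℂ) + 1) k * PowerSeries.coeff n (V^k)) := by
    intro k hk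
    obtain ⟨hk1, hkn⟩ := Finset.mem_Icc.mp hk
    rw [hby n k, hFyY, ff_eq_bc (lam / ((γ:ℝ):ℂ)) (k-1)]
    have hVk : PowerSeries.coeff n (V^k) = ((γ:ℝ):ℂ)^k * PowerSeries.coeff n (Ys^k) := by
      rw [hVdef, smul_pow, map_smul, smul_eq_mul]
    rw [hVk, hfun, if_neg (by omega), show lam/((γ:ℝ):ℂ) + 1 - 1 = lam/((γ:ℝ):ℂ) from by ring]
    have hfacts : ((k.factorial:ℕ):ℂ) = (k:ℂ) * (((k-1).factorial:ℕ):ℂ) := by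
      conv_lhs => rw [show k = (k-1)+1 from by omega]
      rw [Nat.factorial_succ]
      push_cast [Nat.cast_sub hk1]
      ring
    have h1 : (((k-1).factorial:ℕ):ℂ) ≠ 0 := fact_ne _
    have h2 : ((n.factorial:ℕ):ℂ) ≠ 0 := fact_ne _
    have h3 : ((k:ℕ):ℂ) ≠ 0 := cast_ne_zero_of_pos hk1
    have hγk : ((γ:ℝ):ℂ)^k = ((γ:ℝ):ℂ)^(k-1) * ((γ:ℝ):ℂ) := by
      conv_lhs => rw [show k = (k-1)+1 from by omega]
      rw [pow_succ]
    rw [hfacts, hγk]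
    field_simp
  rw [Finset.sum_congr rfl stepL, ← Finset.mul_sum]
  have eV : ∑ k ∈ Finset.Icc 1 n, hfun (lam/((γ:ℝ):ℂ) + 1) k * PowerSeries.coeff n (V^k)
      = PowerSeries.coeff n (evalAt V (hfun (lam/((γ:ℝ):ℂ) + 1))) := by
    rw [coeff_evalAt, ← sum_Icc1_eq_range n _ (by simp [hfun])]
  rw [eV, FIN, map_smul, smul_eq_mul, starE ((α:ℝ):ℂ) ((β:ℝ):ℂ) F hF (((γ:ℝ):ℂ) + lam) n hn]
  rw [Finset.mul_sum, Finset.mul_sum]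
  apply Finset.sum_congr rfl
  intro N hN
  obtain ⟨hN1, hNn⟩ := Finset.mem_Icc.mp hN
  rw [hbx n N, ff_eq_bc (((α:ℝ):ℂ) * n + ((β:ℝ):ℂ) * N + ((γ:ℝ):ℂ) - 1 + lam) (N-1)]
  rw [show ((α:ℝ):ℂ) * n + ((β:ℝ):ℂ) * N + (((γ:ℝ):ℂ) + lam) - 1
      = ((α:ℝ):ℂ) * n + ((β:ℝ):ℂ) * N + ((γ:ℝ):ℂ) - 1 + lam from by ring]
  have hfacts : ((N.factorial:ℕ):ℂ) = (N:ℂ) * (((N-1).factorial:ℕ):ℂ) := by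
    conv_lhs => rw [show N = (N-1)+1 from by omega]
    rw [Nat.factorial_succ]
    push_cast [Nat.cast_sub hN1]
    ring
  have h1 : (((N-1).factorial:ℕ):ℂ) ≠ 0 := fact_ne _
  have h2 : ((n.factorial:ℕ):ℂ) ≠ 0 := fact_ne _
  have h3 : ((N:ℕ):ℂ) ≠ 0 := cast_ne_zero_of_pos hN1
  rw [hfacts]
  field_simp
end

section
/- Let d ≠ 0, let y = Y_{a,b,c,d}(x), and set ŷ_0 = 1 and ŷ_n = d * sum_{k=1}^n (1/n!)*[prod_{j=1}^{k-1}(an+bk+cj+d)]*B_{n,k}(1!x). Then for any positive integer r, sum over compositions m_1+...+m_r = n (m_i ≥ 0) of ŷ_{m_1}*...*ŷ_{m_r} equals d*r * sum_{k=1}^n (1/n!)*[prod_{j=1}^{k-1}(an+bk+cj+dr)]*B_{n,k}(1!x_1, 2!x_2, ...). -/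
open Finset

namespace BellAux

/-- sum over `Icc 1 m` as sum over `range m`. -/
lemma sum_Icc_one {M : Type*} [AddCommMonoid M] (m : ℕ) (f : ℕ → M) :
    ∑ j ∈ Icc 1 m, f j = ∑ j ∈ range m, f (j + 1) := by
  induction m with
  | zero => simp
  | succ m ih =>
    rw [← Finset.Ico_add_one_right_eq_Icc] at ih ⊢
    rw [Finset.sum_Ico_succ_top (by omega), Finset.sum_range_succ, ih]

lemma prod_Icc_one {M : Type*} [CommMonoid M] (m : ℕ) (f : ℕ → M) :
    ∏ j ∈ Icc 1 m, f j = ∏ j ∈ range m, f (j + 1) := by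
  induction m with
  | zero => simp
  | succ m ih =>
    rw [← Finset.Ico_add_one_right_eq_Icc] at ih ⊢
    rw [Finset.prod_Ico_succ_top (by omega), Finset.prod_range_succ, ih]

/-- triangular double-sum swap -/
lemma sum_tri_comm (m : ℕ) (f : ℕ → ℕ → ℂ) :
    ∑ j ∈ Icc 1 m, ∑ i ∈ Icc 1 (m - j), f j i
      = ∑ i ∈ Icc 1 m, ∑ j ∈ Icc 1 (m - i), f j i := by
  rw [Finset.sum_sigma', Finset.sum_sigma']
  refine Finset.sum_nbij' (fun p => ⟨p.2, p.1⟩) (fun p => ⟨p.2, p.1⟩) ?_ ?_ ?_ ?_ ?_ <;>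
    intro p hp <;>
    simp only [Finset.mem_sigma, Finset.mem_Icc] at * <;>
    first
      | omega
      | rfl

/-- swap an outer `range (n+1)` sum with inner `Icc 1 m` sum, reindexing. -/
lemma sum_range_Icc_swap (n : ℕ) (f : ℕ → ℕ → ℂ) :
    ∑ m ∈ range (n + 1), ∑ j ∈ Icc 1 m, f j m
      = ∑ j ∈ Icc 1 n, ∑ m ∈ range (n + 1 - j), f j (j + m) := by
  rw [Finset.sum_sigma', Finset.sum_sigma']
  refine Finset.sum_nbij' (fun p => ⟨p.2, p.1 - p.2⟩) (fun p => ⟨p.1 + p.2, p.1⟩) ?_ ?_ ?_ ?_ ?_ <;>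
    intro p hp <;>
    simp only [Finset.mem_sigma, Finset.mem_Icc, Finset.mem_range] at *
  · omega
  · omega
  · ext <;> simp <;> omega
  · ext <;> simp <;> omega
  · congr 1
    omega

section defs

variable (a b c : ℂ) (x : ℕ → ℂ)

noncomputable def gg : ℕ → ℕ → ℂ
  | m, 0 => if m = 0 then 1 else 0
  | m, k + 1 => ∑ j ∈ Icc 1 m, x j * gg (m - j) k

noncomputable def GG (m k : ℕ) : ℂ := (k.factorial : ℂ)⁻¹ * gg x m k

noncomputable def Wm (ε : ℂ) (m : ℕ) : ℂ :=
  ∑ k ∈ range m, (∏ i ∈ range k, (a * m + b * (k + 1) + ε + c * i)) * GG x m (k + 1)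

noncomputable def Wz (ε : ℂ) (m : ℕ) : ℂ :=
  ∑ k ∈ range (m + 1), (∏ i ∈ range k, (a * m + b * k + ε + c * i)) * GG x m k

noncomputable def FF (e : ℂ) (m : ℕ) : ℂ := if m = 0 then 1 else e * Wm a b c x (e + c) m

end defs

variable {a b c : ℂ} {x : ℕ → ℂ}

lemma gg_zero_right (m : ℕ) : gg x m 0 = if m = 0 then 1 else 0 := rfl

lemma gg_succ (m k : ℕ) : gg x m (k + 1) = ∑ j ∈ Icc 1 m, x j * gg x (m - j) k := rfl

lemma gg_eq_zero : ∀ k m, m < k → gg x m k = 0 := by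
  intro k
  induction k with
  | zero => omega
  | succ k ih =>
    intro m hm
    rw [gg_succ]
    refine Finset.sum_eq_zero fun j hj => ?_
    rw [Finset.mem_Icc] at hj
    rw [ih _ (by omega), mul_zero]

lemma GG_zero_right (m : ℕ) : GG x m 0 = if m = 0 then 1 else 0 := by
  simp [GG, gg_zero_right]

lemma GG_eq_zero {k m : ℕ} (h : m < k) : GG x m k = 0 := by
  simp [GG, gg_eq_zero k m h]

lemma GG_zero_zero : GG x 0 0 = 1 := by simp [GG_zero_right]

/-- L1 -/
lemma GG_succ_mul (m k : ℕ) :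
    ((k : ℂ) + 1) * GG x m (k + 1) = ∑ j ∈ Icc 1 m, x j * GG x (m - j) k := by
  have h1 : ((k : ℂ) + 1) ≠ 0 := Nat.cast_add_one_ne_zero k
  have h2 : (k.factorial : ℂ) ≠ 0 := Nat.cast_ne_zero.mpr k.factorial_ne_zero
  have hfac : ((k : ℂ) + 1) * ((k + 1).factorial : ℂ)⁻¹ = (k.factorial : ℂ)⁻¹ := by
    rw [Nat.factorial_succ]
    push_cast
    field_simp
  calc ((k : ℂ) + 1) * GG x m (k + 1)
      = ((k : ℂ) + 1) * ((k + 1).factorial : ℂ)⁻¹ * gg x m (k + 1) := by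
        rw [GG]; ring
    _ = (k.factorial : ℂ)⁻¹ * ∑ j ∈ Icc 1 m, x j * gg x (m - j) k := by
        rw [hfac, gg_succ]
    _ = ∑ j ∈ Icc 1 m, x j * GG x (m - j) k := by
        rw [Finset.mul_sum]
        exact Finset.sum_congr rfl fun _ _ => by rw [GG]; ring

/-- L2 on gg -/
lemma gg_mul_self : ∀ (k m : ℕ), (m : ℂ) * gg x m (k + 1)
    = ((k : ℂ) + 1) * ∑ j ∈ Icc 1 m, (j : ℂ) * x j * gg x (m - j) k := by
  intro k
  induction k with
  | zero =>
    intro m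
    rcases Nat.eq_zero_or_pos m with rfl | hm
    · simp [gg_succ]
    have hL : gg x m (0 + 1) = x m := by
      rw [gg_succ, Finset.sum_eq_single m]
      · simp [gg_zero_right]
      · intro j hj hne
        rw [Finset.mem_Icc] at hj
        rw [gg_zero_right, if_neg (by omega), mul_zero]
      · intro h
        exact absurd (Finset.mem_Icc.mpr ⟨hm, le_refl m⟩) h
    have hR : ∑ j ∈ Icc 1 m, (j : ℂ) * x j * gg x (m - j) 0 = (m : ℂ) * x m := by
      rw [Finset.sum_eq_single m]
      · simp [gg_zero_right]
      · intro j hj hne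
        rw [Finset.mem_Icc] at hj
        rw [gg_zero_right, if_neg (by omega), mul_zero]
      · intro h
        exact absurd (Finset.mem_Icc.mpr ⟨hm, le_refl m⟩) h
    rw [hL, hR]
    ring
  | succ k ih =>
    intro m
    rw [gg_succ, Finset.mul_sum]
    have split : ∀ j ∈ Icc 1 m, (m : ℂ) * (x j * gg x (m - j) (k + 1))
        = (j : ℂ) * x j * gg x (m - j) (k + 1)
          + x j * (((m - j : ℕ) : ℂ) * gg x (m - j) (k + 1)) := by
      intro j hj
      rw [Finset.mem_Icc] at hj
      rw [Nat.cast_sub hj.2]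
      ring
    rw [Finset.sum_congr rfl split, Finset.sum_add_distrib]
    have second : ∑ j ∈ Icc 1 m, x j * (((m - j : ℕ) : ℂ) * gg x (m - j) (k + 1))
        = ((k : ℂ) + 1) * ∑ j ∈ Icc 1 m, (j : ℂ) * x j * gg x (m - j) (k + 1) := by
      calc ∑ j ∈ Icc 1 m, x j * (((m - j : ℕ) : ℂ) * gg x (m - j) (k + 1))
          = ∑ j ∈ Icc 1 m, ∑ i ∈ Icc 1 (m - j),
              ((k : ℂ) + 1) * (x j * ((i : ℂ) * x i * gg x (m - j - i) k)) := by
            refine Finset.sum_congr rfl fun j hj => ?_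
            rw [ih (m - j), Finset.mul_sum, Finset.mul_sum]
            exact Finset.sum_congr rfl fun i hi => by ring
        _ = ∑ i ∈ Icc 1 m, ∑ j ∈ Icc 1 (m - i),
              ((k : ℂ) + 1) * (x j * ((i : ℂ) * x i * gg x (m - j - i) k)) :=
            sum_tri_comm m _
        _ = ((k : ℂ) + 1) * ∑ i ∈ Icc 1 m, (i : ℂ) * x i * gg x (m - i) (k + 1) := by
            rw [Finset.mul_sum]
            refine Finset.sum_congr rfl fun i hi => ?_
            rw [gg_succ (m - i) k, Finset.mul_sum, Finset.mul_sum]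
            refine Finset.sum_congr rfl fun j hj => ?_
            have : m - j - i = m - i - j := by omega
            rw [this]
            ring
    rw [second]
    push_cast
    ring

/-- L2 on GG -/
lemma GG_mul_self (m k : ℕ) :
    (m : ℂ) * GG x m (k + 1) = ∑ j ∈ Icc 1 m, (j : ℂ) * x j * GG x (m - j) k := by
  have h1 : ((k : ℂ) + 1) ≠ 0 := Nat.cast_add_one_ne_zero k
  have h2 : (k.factorial : ℂ) ≠ 0 := Nat.cast_ne_zero.mpr k.factorial_ne_zero
  have hfac : (((k + 1).factorial : ℂ))⁻¹ * ((k : ℂ) + 1) = (k.factorial : ℂ)⁻¹ := by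
    rw [Nat.factorial_succ]
    push_cast
    field_simp
  calc (m : ℂ) * GG x m (k + 1)
      = ((k + 1).factorial : ℂ)⁻¹ * ((m : ℂ) * gg x m (k + 1)) := by rw [GG]; ring
    _ = (((k + 1).factorial : ℂ)⁻¹ * ((k : ℂ) + 1))
          * ∑ j ∈ Icc 1 m, (j : ℂ) * x j * gg x (m - j) k := by rw [gg_mul_self]; ring
    _ = ∑ j ∈ Icc 1 m, (j : ℂ) * x j * GG x (m - j) k := by
        rw [hfac, Finset.mul_sum]
        exact Finset.sum_congr rfl fun _ _ => by rw [GG]; ring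

lemma Wz_eq_sum_range {ε : ℂ} {m M : ℕ} (h : m + 1 ≤ M) :
    Wz a b c x ε m
      = ∑ k ∈ range M, (∏ i ∈ range k, (a * m + b * k + ε + c * i)) * GG x m k := by
  rw [Wz]
  apply Finset.sum_subset
  · intro k hk
    simp only [Finset.mem_range] at *
    omega
  · intro k hk hnk
    simp only [Finset.mem_range] at *
    rw [GG_eq_zero (by omega), mul_zero]

/-- Lemma B' -/
lemma Wm_mul_self (ε : ℂ) (m : ℕ) :
    (m : ℂ) * Wm a b c x ε m
      = ∑ j ∈ Icc 1 m, (j : ℂ) * x j * Wz a b c x (ε + a * j + b) (m - j) := by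
  rw [Wm, Finset.mul_sum]
  calc ∑ k ∈ range m, (m : ℂ) * ((∏ i ∈ range k, (a * m + b * (k + 1) + ε + c * i)) * GG x m (k + 1))
      = ∑ k ∈ range m, ∑ j ∈ Icc 1 m,
          (j : ℂ) * x j * ((∏ i ∈ range k, (a * m + b * (k + 1) + ε + c * i)) * GG x (m - j) k) := by
        refine Finset.sum_congr rfl fun k hk => ?_
        rw [show (m : ℂ) * ((∏ i ∈ range k, (a * m + b * (k + 1) + ε + c * i)) * GG x m (k + 1))
            = (∏ i ∈ range k, (a * m + b * (k + 1) + ε + c * i)) * ((m : ℂ) * GG x m (k + 1))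
          from by ring, GG_mul_self, Finset.mul_sum]
        exact Finset.sum_congr rfl fun j hj => by ring
    _ = ∑ j ∈ Icc 1 m, ∑ k ∈ range m,
          (j : ℂ) * x j * ((∏ i ∈ range k, (a * m + b * (k + 1) + ε + c * i)) * GG x (m - j) k) :=
        Finset.sum_comm
    _ = ∑ j ∈ Icc 1 m, (j : ℂ) * x j * Wz a b c x (ε + a * j + b) (m - j) := by
        refine Finset.sum_congr rfl fun j hj => ?_
        rw [Finset.mem_Icc] at hj
        rw [Wz_eq_sum_range (M := m) (by omega), Finset.mul_sum]
        refine Finset.sum_congr rfl fun k hk => ?_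
        have hc : ((m - j : ℕ) : ℂ) = (m : ℂ) - (j : ℂ) := Nat.cast_sub hj.2
        rw [show (∏ i ∈ range k, (a * ((m - j : ℕ) : ℂ) + b * k + (ε + a * j + b) + c * i))
            = ∏ i ∈ range k, (a * m + b * (k + 1) + ε + c * i) from
          Finset.prod_congr rfl fun i _ => by rw [hc]; ring]

/-- Lemma C -/
lemma Wz_structure (ε : ℂ) (m : ℕ) :
    Wz a b c x ε m = (if m = 0 then 1 else 0) + (a * m + ε) * Wm a b c x (ε + c) m
      + b * ∑ j ∈ Icc 1 m, x j * Wz a b c x (ε + a * j + b + c) (m - j) := by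
  have key : ∑ k ∈ range m,
      (∏ i ∈ range (k + 1), (a * m + b * ((k + 1 : ℕ) : ℂ) + ε + c * i)) * GG x m (k + 1)
        = (a * m + ε) * Wm a b c x (ε + c) m
          + b * ∑ j ∈ Icc 1 m, x j * Wz a b c x (ε + a * j + b + c) (m - j) := by
    calc ∑ k ∈ range m,
        (∏ i ∈ range (k + 1), (a * m + b * ((k + 1 : ℕ) : ℂ) + ε + c * i)) * GG x m (k + 1)
        = ∑ k ∈ range m,
            ((a * m + ε) * ((∏ i ∈ range k, (a * m + b * (k + 1) + (ε + c) + c * i))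
                * GG x m (k + 1))
              + b * ((∏ i ∈ range k, (a * m + b * (k + 1) + (ε + c) + c * i))
                * (((k : ℂ) + 1) * GG x m (k + 1)))) := by
          refine Finset.sum_congr rfl fun k hk => ?_
          have hp : ∀ i ∈ range k,
              a * (m : ℂ) + b * ((k + 1 : ℕ) : ℂ) + ε + c * ((i + 1 : ℕ) : ℂ)
                = a * m + b * ((k : ℂ) + 1) + (ε + c) + c * i := fun i _ => by push_cast; ring
          rw [Finset.prod_range_succ', Finset.prod_congr rfl hp]
          push_cast
          ring
      _ = (a * m + ε) * Wm a b c x (ε + c) m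
          + b * ∑ j ∈ Icc 1 m, x j * Wz a b c x (ε + a * j + b + c) (m - j) := by
          rw [Finset.sum_add_distrib]
          congr 1
          · rw [Wm, Finset.mul_sum]
          · rw [Finset.mul_sum]
            calc ∑ k ∈ range m, b * ((∏ i ∈ range k, (a * m + b * (k + 1) + (ε + c) + c * i))
                  * (((k : ℂ) + 1) * GG x m (k + 1)))
                = ∑ k ∈ range m, ∑ j ∈ Icc 1 m, b * (x j
                    * ((∏ i ∈ range k, (a * m + b * (k + 1) + (ε + c) + c * i))
                      * GG x (m - j) k)) := by
                  refine Finset.sum_congr rfl fun k hk => ?_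
                  rw [show b * ((∏ i ∈ range k, (a * m + b * (k + 1) + (ε + c) + c * i))
                        * (((k : ℂ) + 1) * GG x m (k + 1)))
                      = b * ((∏ i ∈ range k, (a * m + b * (k + 1) + (ε + c) + c * i))
                        * (((k : ℂ) + 1) * GG x m (k + 1))) from rfl,
                    show (((k : ℂ) + 1) * GG x m (k + 1))
                      = ∑ j ∈ Icc 1 m, x j * GG x (m - j) k from GG_succ_mul m k,
                    Finset.mul_sum, Finset.mul_sum]
                  exact Finset.sum_congr rfl fun j hj => by ring
              _ = ∑ j ∈ Icc 1 m, ∑ k ∈ range m, b * (x j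
                    * ((∏ i ∈ range k, (a * m + b * (k + 1) + (ε + c) + c * i))
                      * GG x (m - j) k)) := Finset.sum_comm
              _ = ∑ j ∈ Icc 1 m, b * (x j * Wz a b c x (ε + a * j + b + c) (m - j)) := by
                  refine Finset.sum_congr rfl fun j hj => ?_
                  rw [Finset.mem_Icc] at hj
                  rw [Wz_eq_sum_range (M := m) (by omega), Finset.mul_sum, Finset.mul_sum]
                  refine Finset.sum_congr rfl fun k hk => ?_
                  have hc : ((m - j : ℕ) : ℂ) = (m : ℂ) - (j : ℂ) := Nat.cast_sub hj.2
                  rw [show (∏ i ∈ range k, (a * ((m - j : ℕ) : ℂ) + b * k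
                        + (ε + a * j + b + c) + c * i))
                      = ∏ i ∈ range k, (a * m + b * (k + 1) + (ε + c) + c * i) from
                    Finset.prod_congr rfl fun i _ => by rw [hc]; ring]
  rw [Wz, Finset.sum_range_succ', key]
  simp only [Finset.prod_range_zero, one_mul, GG_zero_right]
  ring

lemma Wm_zero (ε : ℂ) : Wm a b c x ε 0 = 0 := by simp [Wm]

lemma FF_zero (e : ℂ) : FF a b c x e 0 = 1 := by simp [FF]

lemma FF_eq (e : ℂ) (m : ℕ) :
    FF a b c x e m = (if m = 0 then 1 else 0) + e * Wm a b c x (e + c) m := by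
  rcases Nat.eq_zero_or_pos m with rfl | hm
  · simp [FF, Wm_zero]
  · rw [FF, if_neg (by omega), if_neg (by omega), zero_add]

/-- Lemma A -/
lemma FF_mul_self (e : ℂ) (m : ℕ) :
    (m : ℂ) * FF a b c x e m
      = e * ∑ j ∈ Icc 1 m, (j : ℂ) * x j * Wz a b c x (e + c + a * j + b) (m - j) := by
  rcases Nat.eq_zero_or_pos m with rfl | hm
  · simp
  · rw [FF, if_neg (by omega), show (m : ℂ) * (e * Wm a b c x (e + c) m)
        = e * ((m : ℂ) * Wm a b c x (e + c) m) from by ring, Wm_mul_self]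

lemma Wz_zero (ε : ℂ) : Wz a b c x ε 0 = 1 := by
  simp [Wz, GG_zero_zero]

lemma sum_if_zero (n : ℕ) (h : ℕ → ℂ) :
    ∑ m ∈ range (n + 1), (if m = 0 then (1 : ℂ) else 0) * h m = h 0 := by
  rw [Finset.sum_eq_single 0]
  · simp
  · intro m hm hne
    rw [if_neg hne, zero_mul]
  · intro habs
    exact absurd (Finset.mem_range.mpr (by omega)) habs

theorem main (a b c : ℂ) (x : ℕ → ℂ) : ∀ n : ℕ,
    (∀ e1 e2 : ℂ, ∑ m ∈ range (n + 1), FF a b c x e1 m * FF a b c x e2 (n - m)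
        = FF a b c x (e1 + e2) n) ∧
    (∀ ε e : ℂ, ∑ m ∈ range (n + 1), Wz a b c x ε m * FF a b c x e (n - m)
        = Wz a b c x (ε + e) n) := by
  intro n
  induction n using Nat.strong_induction_on with
  | _ n ih =>
    rcases Nat.eq_zero_or_pos n with rfl | hn
    · constructor
      · intro e1 e2
        simp [FF_zero]
      · intro ε e
        simp [FF_zero, Wz_zero]
    -- the reusable convolution step
    have key2 : ∀ (t : ℕ → ℂ) (A : ℕ → ℂ) (e : ℂ),
        ∑ m ∈ range (n + 1),
            (∑ j ∈ Icc 1 m, t j * Wz a b c x (A j) (m - j)) * FF a b c x e (n - m)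
          = ∑ j ∈ Icc 1 n, t j * Wz a b c x (A j + e) (n - j) := by
      intro t A e
      calc ∑ m ∈ range (n + 1),
              (∑ j ∈ Icc 1 m, t j * Wz a b c x (A j) (m - j)) * FF a b c x e (n - m)
          = ∑ m ∈ range (n + 1), ∑ j ∈ Icc 1 m,
              t j * (Wz a b c x (A j) (m - j) * FF a b c x e (n - m)) := by
            refine Finset.sum_congr rfl fun m hm => ?_
            rw [Finset.sum_mul]
            exact Finset.sum_congr rfl fun j hj => by ring
        _ = ∑ j ∈ Icc 1 n, ∑ m ∈ range (n + 1 - j),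
              t j * (Wz a b c x (A j) ((j + m) - j) * FF a b c x e (n - (j + m))) :=
            sum_range_Icc_swap n _
        _ = ∑ j ∈ Icc 1 n, t j * Wz a b c x (A j + e) (n - j) := by
            refine Finset.sum_congr rfl fun j hj => ?_
            rw [Finset.mem_Icc] at hj
            have h1 : n + 1 - j = (n - j) + 1 := by omega
            rw [h1]
            calc ∑ m ∈ range ((n - j) + 1),
                    t j * (Wz a b c x (A j) ((j + m) - j) * FF a b c x e (n - (j + m)))
                = ∑ m ∈ range ((n - j) + 1),
                    t j * (Wz a b c x (A j) m * FF a b c x e ((n - j) - m)) := by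
                  refine Finset.sum_congr rfl fun m hm => ?_
                  rw [Finset.mem_range] at hm
                  have h2 : (j + m) - j = m := by omega
                  have h3 : n - (j + m) = (n - j) - m := by omega
                  rw [h2, h3]
              _ = t j * Wz a b c x (A j + e) (n - j) := by
                  rw [← Finset.mul_sum, (ih (n - j) (by omega)).2 (A j) e]
    have hI : ∀ e1 e2 : ℂ, ∑ m ∈ range (n + 1), FF a b c x e1 m * FF a b c x e2 (n - m)
        = FF a b c x (e1 + e2) n := by
      intro e1 e2
      have hcast : (n : ℂ) ≠ 0 := Nat.cast_ne_zero.mpr (by omega)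
      apply mul_left_cancel₀ hcast
      have hhalf : ∀ f1 f2 : ℂ,
          ∑ m ∈ range (n + 1), ((m : ℂ) * FF a b c x f1 m) * FF a b c x f2 (n - m)
            = f1 * ∑ j ∈ Icc 1 n, (j : ℂ) * x j * Wz a b c x (f1 + c + a * j + b + f2) (n - j) := by
        intro f1 f2
        calc ∑ m ∈ range (n + 1), ((m : ℂ) * FF a b c x f1 m) * FF a b c x f2 (n - m)
            = ∑ m ∈ range (n + 1), f1 *
                ((∑ j ∈ Icc 1 m, (j : ℂ) * x j * Wz a b c x (f1 + c + a * j + b) (m - j))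
                  * FF a b c x f2 (n - m)) := by
              refine Finset.sum_congr rfl fun m hm => ?_
              rw [FF_mul_self]
              ring
          _ = f1 * ∑ m ∈ range (n + 1),
                (∑ j ∈ Icc 1 m, (j : ℂ) * x j * Wz a b c x (f1 + c + a * j + b) (m - j))
                  * FF a b c x f2 (n - m) := by
              rw [Finset.mul_sum]
          _ = f1 * ∑ j ∈ Icc 1 n, (j : ℂ) * x j * Wz a b c x (f1 + c + a * j + b + f2) (n - j) := by
              rw [key2 (fun j => (j : ℂ) * x j) (fun j => f1 + c + a * j + b) f2]
      calc (n : ℂ) * ∑ m ∈ range (n + 1), FF a b c x e1 m * FF a b c x e2 (n - m)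
          = ∑ m ∈ range (n + 1), ((m : ℂ) * FF a b c x e1 m) * FF a b c x e2 (n - m)
            + ∑ m ∈ range (n + 1), FF a b c x e1 m * (((n - m : ℕ) : ℂ) * FF a b c x e2 (n - m)) := by
            rw [Finset.mul_sum, ← Finset.sum_add_distrib]
            refine Finset.sum_congr rfl fun m hm => ?_
            rw [Finset.mem_range] at hm
            rw [Nat.cast_sub (by omega : m ≤ n)]
            ring
        _ = ∑ m ∈ range (n + 1), ((m : ℂ) * FF a b c x e1 m) * FF a b c x e2 (n - m)
            + ∑ m ∈ range (n + 1), ((m : ℂ) * FF a b c x e2 m) * FF a b c x e1 (n - m) := by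
            congr 1
            calc ∑ m ∈ range (n + 1), FF a b c x e1 m * (((n - m : ℕ) : ℂ) * FF a b c x e2 (n - m))
                = ∑ m ∈ range (n + 1),
                    FF a b c x e1 (n - m) * (((n - (n - m) : ℕ) : ℂ) * FF a b c x e2 (n - (n - m))) := by
                  rw [← Finset.sum_range_reflect
                    (fun m => FF a b c x e1 m * (((n - m : ℕ) : ℂ) * FF a b c x e2 (n - m))) (n + 1)]
                  exact Finset.sum_congr rfl fun m hm => by rw [Nat.add_sub_cancel]
              _ = ∑ m ∈ range (n + 1), ((m : ℂ) * FF a b c x e2 m) * FF a b c x e1 (n - m) := by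
                  refine Finset.sum_congr rfl fun m hm => ?_
                  rw [Finset.mem_range] at hm
                  have h4 : n - (n - m) = m := by omega
                  rw [h4]
                  ring
        _ = e1 * ∑ j ∈ Icc 1 n, (j : ℂ) * x j * Wz a b c x (e1 + c + a * j + b + e2) (n - j)
            + e2 * ∑ j ∈ Icc 1 n, (j : ℂ) * x j * Wz a b c x (e2 + c + a * j + b + e1) (n - j) := by
            rw [hhalf e1 e2, hhalf e2 e1]
        _ = (n : ℂ) * FF a b c x (e1 + e2) n := by
            rw [FF_mul_self]
            have harg1 : ∀ j : ℕ, e1 + c + a * (j : ℂ) + b + e2 = e1 + e2 + c + a * j + b :=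
              fun j => by ring
            have harg2 : ∀ j : ℕ, e2 + c + a * (j : ℂ) + b + e1 = e1 + e2 + c + a * j + b :=
              fun j => by ring
            simp only [harg1, harg2]
            ring
    refine ⟨hI, ?_⟩
    intro ε e
    -- Part II
    have piece0 : ∑ m ∈ range (n + 1), (if m = 0 then (1 : ℂ) else 0) * FF a b c x e (n - m)
        = FF a b c x e n := by
      have := sum_if_zero n (fun m => FF a b c x e (n - m))
      simpa using this
    have pieceb : ∑ m ∈ range (n + 1),
        (b * ∑ j ∈ Icc 1 m, x j * Wz a b c x (ε + a * j + b + c) (m - j))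
          * FF a b c x e (n - m)
        = b * ∑ j ∈ Icc 1 n, x j * Wz a b c x (ε + a * j + b + c + e) (n - j) := by
      calc ∑ m ∈ range (n + 1),
          (b * ∑ j ∈ Icc 1 m, x j * Wz a b c x (ε + a * j + b + c) (m - j))
            * FF a b c x e (n - m)
          = b * ∑ m ∈ range (n + 1),
              (∑ j ∈ Icc 1 m, x j * Wz a b c x (ε + a * j + b + c) (m - j))
                * FF a b c x e (n - m) := by
            rw [Finset.mul_sum]
            exact Finset.sum_congr rfl fun m hm => by ring
        _ = b * ∑ j ∈ Icc 1 n, x j * Wz a b c x (ε + a * j + b + c + e) (n - j) := by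
            rw [key2 x (fun j => ε + a * j + b + c) e]
    have piecea : ∑ m ∈ range (n + 1),
        (a * ((m : ℂ) * Wm a b c x (ε + c) m)) * FF a b c x e (n - m)
        = a * ∑ j ∈ Icc 1 n, (j : ℂ) * x j * Wz a b c x (ε + c + a * j + b + e) (n - j) := by
      calc ∑ m ∈ range (n + 1), (a * ((m : ℂ) * Wm a b c x (ε + c) m)) * FF a b c x e (n - m)
          = a * ∑ m ∈ range (n + 1),
              (∑ j ∈ Icc 1 m, (j : ℂ) * x j * Wz a b c x (ε + c + a * j + b) (m - j))
                * FF a b c x e (n - m) := by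
            rw [Finset.mul_sum]
            refine Finset.sum_congr rfl fun m hm => ?_
            rw [Wm_mul_self]
            ring
        _ = a * ∑ j ∈ Icc 1 n, (j : ℂ) * x j * Wz a b c x (ε + c + a * j + b + e) (n - j) := by
            rw [key2 (fun j => (j : ℂ) * x j) (fun j => ε + c + a * j + b) e]
    have pieceeps : ε * ∑ m ∈ range (n + 1), Wm a b c x (ε + c) m * FF a b c x e (n - m)
        = FF a b c x (ε + e) n - FF a b c x e n := by
      have hexp : ∑ m ∈ range (n + 1), FF a b c x ε m * FF a b c x e (n - m)
          = FF a b c x e n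
            + ε * ∑ m ∈ range (n + 1), Wm a b c x (ε + c) m * FF a b c x e (n - m) := by
        calc ∑ m ∈ range (n + 1), FF a b c x ε m * FF a b c x e (n - m)
            = ∑ m ∈ range (n + 1), ((if m = 0 then (1 : ℂ) else 0) * FF a b c x e (n - m)
                + ε * (Wm a b c x (ε + c) m * FF a b c x e (n - m))) := by
              refine Finset.sum_congr rfl fun m hm => ?_
              rw [FF_eq]
              ring
          _ = FF a b c x e n
              + ε * ∑ m ∈ range (n + 1), Wm a b c x (ε + c) m * FF a b c x e (n - m) := by
              rw [Finset.sum_add_distrib, piece0, ← Finset.mul_sum]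
      have hIe := hI ε e
      rw [hexp] at hIe
      linear_combination hIe
    -- assemble
    calc ∑ m ∈ range (n + 1), Wz a b c x ε m * FF a b c x e (n - m)
        = ∑ m ∈ range (n + 1), ((if m = 0 then (1 : ℂ) else 0) * FF a b c x e (n - m)
            + ((a * ((m : ℂ) * Wm a b c x (ε + c) m)) * FF a b c x e (n - m)
              + (ε * (Wm a b c x (ε + c) m * FF a b c x e (n - m))
                + (b * ∑ j ∈ Icc 1 m, x j * Wz a b c x (ε + a * j + b + c) (m - j))
                  * FF a b c x e (n - m)))) := by
          refine Finset.sum_congr rfl fun m hm => ?_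
          rw [Wz_structure (a := a) (b := b) (c := c) (x := x) ε m]
          ring
      _ = FF a b c x e n
          + (a * ∑ j ∈ Icc 1 n, (j : ℂ) * x j * Wz a b c x (ε + c + a * j + b + e) (n - j)
            + ((FF a b c x (ε + e) n - FF a b c x e n)
              + b * ∑ j ∈ Icc 1 n, x j * Wz a b c x (ε + a * j + b + c + e) (n - j))) := by
          rw [Finset.sum_add_distrib, Finset.sum_add_distrib, Finset.sum_add_distrib,
            piece0, piecea, pieceb, ← Finset.mul_sum, pieceeps]
      _ = Wz a b c x (ε + e) n := by
          rw [Wz_structure (a := a) (b := b) (c := c) (x := x) (ε + e) n, if_neg (by omega)]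
          have hW : (a * n + (ε + e)) * Wm a b c x (ε + e + c) n
              = a * ((n : ℂ) * Wm a b c x (ε + e + c) n)
                + (ε + e) * Wm a b c x (ε + e + c) n := by ring
          rw [hW, Wm_mul_self]
          have hFF : FF a b c x (ε + e) n = (ε + e) * Wm a b c x (ε + e + c) n := by
            rw [FF_eq, if_neg (by omega), zero_add]
          rw [hFF]
          have harg1 : ∀ j : ℕ, ε + c + a * (j : ℂ) + b + e = ε + e + c + a * j + b :=
            fun j => by ring
          have harg2 : ∀ j : ℕ, ε + a * (j : ℂ) + b + c + e = ε + e + a * j + b + c :=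
            fun j => by ring
          simp only [harg1, harg2]
          ring

lemma sum_adt_succ (r n : ℕ) (f : (Fin (r + 1) → ℕ) → ℂ) :
    ∑ m ∈ Finset.Nat.antidiagonalTuple (r + 1) n, f m
      = ∑ p ∈ Finset.HasAntidiagonal.antidiagonal n, ∑ q ∈ Finset.Nat.antidiagonalTuple r p.2,
          f (Fin.cons p.1 q) := by
  have hs : (∑ p ∈ Finset.HasAntidiagonal.antidiagonal n, ∑ q ∈ Finset.Nat.antidiagonalTuple r p.2,
        f (Fin.cons p.1 q))
      = ∑ y ∈ (Finset.HasAntidiagonal.antidiagonal n).sigma (fun p => Finset.Nat.antidiagonalTuple r p.2),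
          f (Fin.cons y.1.1 y.2) :=
    (Finset.sum_sigma (Finset.HasAntidiagonal.antidiagonal n) (fun p => Finset.Nat.antidiagonalTuple r p.2)
      (fun y => f (Fin.cons y.1.1 y.2))).symm
  rw [hs]
  refine Finset.sum_nbij'
    (fun (m : Fin (r + 1) → ℕ) =>
      (⟨(m 0, ∑ i : Fin r, m i.succ), Fin.tail m⟩ : Σ _ : ℕ × ℕ, Fin r → ℕ))
    (fun q => Fin.cons q.1.1 q.2)
    ?_ ?_ ?_ ?_ ?_
  · intro m hm
    rw [Finset.Nat.mem_antidiagonalTuple] at hm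
    refine Finset.mem_sigma.mpr ⟨?_, ?_⟩
    · rw [Finset.HasAntidiagonal.mem_antidiagonal, ← hm, Fin.sum_univ_succ]
    · rw [Finset.Nat.mem_antidiagonalTuple]
      rfl
  · intro q hq
    rw [Finset.mem_sigma] at hq
    obtain ⟨h1, h2⟩ := hq
    rw [Finset.HasAntidiagonal.mem_antidiagonal] at h1
    rw [Finset.Nat.mem_antidiagonalTuple] at h2 ⊢
    rw [Fin.sum_univ_succ]
    simp only [Fin.cons_zero, Fin.cons_succ]
    rw [h2, h1]
  · intro m hm
    exact Fin.cons_self_tail m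
  · intro q hq
    rw [Finset.mem_sigma] at hq
    obtain ⟨h1, h2⟩ := hq
    rw [Finset.Nat.mem_antidiagonalTuple] at h2
    refine Sigma.ext ?_ (by simp [Fin.tail_cons])
    simp only [Fin.cons_zero, Fin.cons_succ]
    rw [h2]
  · intro m hm
    rw [Fin.cons_self_tail]

lemma conv (a b c d : ℂ) (x : ℕ → ℂ) :
    ∀ r n : ℕ, ∑ m ∈ Finset.Nat.antidiagonalTuple r n, ∏ i, FF a b c x d (m i)
      = FF a b c x (d * r) n := by
  intro r
  induction r with
  | zero =>
    intro n
    rcases Nat.eq_zero_or_pos n with rfl | hn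
    · simp [FF_zero]
    · obtain ⟨N, rfl⟩ : ∃ N, n = N + 1 := ⟨n - 1, by omega⟩
      rw [Finset.Nat.antidiagonalTuple_zero_succ]
      rw [FF, if_neg (by omega)]
      simp
  | succ r ihr =>
    intro n
    rw [sum_adt_succ]
    have hstep : ∀ p ∈ Finset.HasAntidiagonal.antidiagonal n,
        ∑ q ∈ Finset.Nat.antidiagonalTuple r p.2,
            ∏ i, FF a b c x d ((Fin.cons p.1 q : Fin (r + 1) → ℕ) i)
          = FF a b c x d p.1 * FF a b c x (d * r) p.2 := by
      intro p hp
      calc ∑ q ∈ Finset.Nat.antidiagonalTuple r p.2,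
              ∏ i, FF a b c x d ((Fin.cons p.1 q : Fin (r + 1) → ℕ) i)
          = ∑ q ∈ Finset.Nat.antidiagonalTuple r p.2,
              FF a b c x d p.1 * ∏ i, FF a b c x d (q i) := by
            refine Finset.sum_congr rfl fun q hq => ?_
            rw [Fin.prod_univ_succ]
            simp only [Fin.cons_zero, Fin.cons_succ]
        _ = FF a b c x d p.1 * FF a b c x (d * r) p.2 := by
            rw [← Finset.mul_sum, ihr p.2]
    rw [Finset.sum_congr rfl hstep]
    rw [Nat.sum_antidiagonal_eq_sum_range_succ_mk]
    rw [(main a b c x n).1 d (d * r)]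
    congr 1
    push_cast
    ring

lemma coeff_pow (x : ℕ → ℂ) : ∀ k n : ℕ,
    PowerSeries.coeff n ((PowerSeries.mk fun j => if j = 0 then (0 : ℂ) else x j) ^ k)
      = gg x n k := by
  intro k
  induction k with
  | zero =>
    intro n
    rw [pow_zero, PowerSeries.coeff_one, gg_zero_right]
  | succ k ihk =>
    intro n
    rw [pow_succ', PowerSeries.coeff_mul, Nat.sum_antidiagonal_eq_sum_range_succ_mk]
    calc ∑ j ∈ range (n + 1),
          PowerSeries.coeff j (PowerSeries.mk fun j => if j = 0 then (0 : ℂ) else x j)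
            * PowerSeries.coeff (n - j)
              ((PowerSeries.mk fun j => if j = 0 then (0 : ℂ) else x j) ^ k)
        = ∑ j ∈ range (n + 1), (if j = 0 then (0 : ℂ) else x j) * gg x (n - j) k := by
          refine Finset.sum_congr rfl fun j hj => ?_
          rw [PowerSeries.coeff_mk, ihk]
      _ = gg x n (k + 1) := by
          rw [Finset.sum_range_succ', gg_succ, sum_Icc_one]
          simp

lemma bell_eq (x : ℕ → ℂ) (n k : ℕ) :
    bellPoly (fun j => (j.factorial : ℂ) * x j) n k = (n.factorial : ℂ) * GG x n k := by
  rw [bellPoly]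
  have hser : (PowerSeries.mk fun j =>
        if j = 0 then (0 : ℂ) else ((j.factorial : ℂ) * x j) / (j.factorial : ℂ))
      = PowerSeries.mk fun j => if j = 0 then (0 : ℂ) else x j := by
    ext j
    rw [PowerSeries.coeff_mk, PowerSeries.coeff_mk]
    split
    · rfl
    · rw [mul_comm, mul_div_assoc, div_self (Nat.cast_ne_zero.mpr j.factorial_ne_zero), mul_one]
  rw [hser, coeff_pow, GG, div_eq_mul_inv]
  ring

lemma FF_formula (a b c e : ℂ) (x : ℕ → ℂ) (n : ℕ) (hn : 1 ≤ n) :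
    e * ∑ k ∈ Finset.Icc 1 n,
        (1 / (n.factorial : ℂ)) *
          (∏ j ∈ Finset.Icc 1 (k - 1), (a * n + b * k + c * j + e)) *
            bellPoly (fun j => (j.factorial : ℂ) * x j) n k
      = FF a b c x e n := by
  have hn0 : (n.factorial : ℂ) ≠ 0 := Nat.cast_ne_zero.mpr n.factorial_ne_zero
  rw [FF, if_neg (by omega), Wm]
  congr 1
  rw [sum_Icc_one n (fun k => (1 / (n.factorial : ℂ)) *
    (∏ j ∈ Finset.Icc 1 (k - 1), (a * n + b * k + c * j + e)) *
      bellPoly (fun j => (j.factorial : ℂ) * x j) n k)]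
  refine Finset.sum_congr rfl fun k hk => ?_
  rw [bell_eq, Nat.add_sub_cancel,
    prod_Icc_one k (fun j => a * n + b * ((k + 1 : ℕ) : ℂ) + c * j + e)]
  have hprod : ∏ i ∈ range k, (a * n + b * ((k + 1 : ℕ) : ℂ) + c * ((i + 1 : ℕ) : ℂ) + e)
      = ∏ i ∈ range k, (a * n + b * ((k : ℂ) + 1) + (e + c) + c * i) :=
    Finset.prod_congr rfl fun i _ => by push_cast; ring
  rw [hprod]
  field_simp

end BellAux

theorem bellTransform_convolution (a b c d : ℂ) (hd : d ≠ 0) (x yhat : ℕ → ℂ)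
    (h0 : yhat 0 = 1)
    (hy : ∀ n, 1 ≤ n →
      yhat n = d * ∑ k ∈ Finset.Icc 1 n,
        (1 / (n.factorial : ℂ)) *
          (∏ j ∈ Finset.Icc 1 (k - 1), (a * n + b * k + c * j + d)) *
            bellPoly (fun j => (j.factorial : ℂ) * x j) n k)
    (r n : ℕ) (hr : 1 ≤ r) (hn : 1 ≤ n) :
    ∑ m ∈ Finset.Nat.antidiagonalTuple r n, ∏ i, yhat (m i) =
      d * r * ∑ k ∈ Finset.Icc 1 n,
        (1 / (n.factorial : ℂ)) *
          (∏ j ∈ Finset.Icc 1 (k - 1), (a * n + b * k + c * j + d * r)) *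
            bellPoly (fun j => (j.factorial : ℂ) * x j) n k := by
  have hyhat : ∀ m, yhat m = BellAux.FF a b c x d m := by
    intro m
    rcases Nat.eq_zero_or_pos m with rfl | hm
    · rw [h0, BellAux.FF_zero]
    · rw [hy m hm, BellAux.FF_formula a b c d x m hm]
  calc ∑ m ∈ Finset.Nat.antidiagonalTuple r n, ∏ i, yhat (m i)
      = ∑ m ∈ Finset.Nat.antidiagonalTuple r n, ∏ i, BellAux.FF a b c x d (m i) :=
        Finset.sum_congr rfl fun m _ => Finset.prod_congr rfl fun i _ => by rw [hyhat]
    _ = BellAux.FF a b c x (d * r) n := BellAux.conv a b c d x r n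
    _ = d * r * ∑ k ∈ Finset.Icc 1 n,
          (1 / (n.factorial : ℂ)) *
            (∏ j ∈ Finset.Icc 1 (k - 1), (a * n + b * k + c * j + d * r)) *
              bellPoly (fun j => (j.factorial : ℂ) * x j) n k :=
        (BellAux.FF_formula a b c (d * r) x n hn).symm
end

section
/- For all n ≥ 1, sum_{k=1}^n (1/(n-k+1)!)*(n!/k!)*C(n-1,k-1) = (1/n)*C(2n, n-1). -/
theorem sum_eq_catalan_intermediate (n : ℕ) (hn : 1 ≤ n) :
    ∑ k ∈ Finset.Icc 1 n,
        (1 / ((n - k + 1).factorial : ℚ)) * ((n.factorial : ℚ) / (k.factorial : ℚ)) *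
          ((n - 1).choose (k - 1) : ℚ) =
      (1 / (n : ℚ)) * ((2 * n).choose (n - 1) : ℚ) := by
  have hV : ((2*n).choose (n-1) : ℕ) = ∑ j ∈ Finset.range n, n.choose j * n.choose (n-1-j) := by
    rw [two_mul, Nat.add_choose_eq, Finset.Nat.sum_antidiagonal_eq_sum_range_succ_mk,
      show (n-1).succ = n from by omega]
  rw [← Finset.Ico_add_one_right_eq_Icc, Finset.sum_Ico_eq_sum_range,
    show n+1-1 = n from by omega, hV]
  push_cast
  rw [Finset.mul_sum]
  refine Finset.sum_congr rfl fun j hj => ?_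
  rw [Finset.mem_range] at hj
  have h1 : n - (1+j) + 1 = n - j := by omega
  have h2 : 1 + j - 1 = j := by omega
  rw [h1, h2]
  rw [Nat.cast_choose ℚ (show j ≤ n-1 by omega), Nat.cast_choose ℚ (le_of_lt hj),
    Nat.cast_choose ℚ (show n-1-j ≤ n by omega), show n-(n-1-j) = 1+j from by omega]
  have hfn : (n.factorial : ℚ) = n * ((n-1).factorial) := by
    exact_mod_cast (Nat.mul_factorial_pred (show n ≠ 0 by omega)).symm
  rw [hfn]
  have hn0 : (n:ℚ) ≠ 0 := by positivity
  have f1 : (((n-1).factorial:ℚ)) ≠ 0 := Nat.cast_ne_zero.mpr (Nat.factorial_ne_zero _)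
  have f2 : (((n-j).factorial:ℚ)) ≠ 0 := Nat.cast_ne_zero.mpr (Nat.factorial_ne_zero _)
  have f3 : (((1+j).factorial:ℚ)) ≠ 0 := Nat.cast_ne_zero.mpr (Nat.factorial_ne_zero _)
  have f4 : ((j.factorial:ℚ)) ≠ 0 := Nat.cast_ne_zero.mpr (Nat.factorial_ne_zero _)
  have f5 : (((n-1-j).factorial:ℚ)) ≠ 0 := Nat.cast_ne_zero.mpr (Nat.factorial_ne_zero _)
  field_simp
end
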